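/- arXiv:1911.05912 — 8 statements merged into one kernel-verified Lean document; each statement's English description precedes it below -/
import Mathlib

section
/- If T is a maximal partial transversal of a Latin square of order n (a set of cells, no two sharing a row, column, or symbol, that cannot be extended to a larger such set), then the length of T satisfies ⌈n/2⌉ ≤ |T| ≤ n. -/
/-- A Latin square of order `n` as a set of triples `(r,c,s)`:
any two coordinates determine the third uniquely. -/
def IsLatinSquare {n : ℕ} (L : Finset (Fin n × Fin n × Fin n)) : Prop :=
  (∀ r c : Fin n, ∃! s : Fin n, (r, c, s) ∈ L) ∧
  (∀ r s : Fin n, ∃! c : Fin n, (r, c, s) ∈ L) ∧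
  (∀ c s : Fin n, ∃! r : Fin n, (r, c, s) ∈ L)

/-- A partial transversal: a subset of the triples with pairwise distinct
rows, columns and symbols. -/
def IsPartialTransversal {α β γ : Type*} (L T : Finset (α × β × γ)) : Prop :=
  T ⊆ L ∧ ∀ t ∈ T, ∀ t' ∈ T, t ≠ t' →
    t.1 ≠ t'.1 ∧ t.2.1 ≠ t'.2.1 ∧ t.2.2 ≠ t'.2.2

/-- A maximal partial transversal: one not properly contained in any
larger partial transversal. -/
def IsMaximalPartialTransversal {α β γ : Type*} (L T : Finset (α × β × γ)) : Prop :=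
  IsPartialTransversal L T ∧
    ∀ T' : Finset (α × β × γ), IsPartialTransversal L T' → T ⊆ T' → T' = T

/-!
The upper bound holds because the cells of `T` lie in distinct rows. For the lower bound, if
`|T| = k < n` pick a row `r` missed by `T`. By maximality, each of the `n - k` cells of row `r`
in a column missed by `T` carries one of the `k` symbols of `T`, and these symbols are distinct
since a row of a Latin square repeats no symbol; hence `n - k ≤ k`.
-/

open Finset

namespace IsPartialTransversal

variable {α β γ : Type*} {L T : Finset (α × β × γ)}

lemma injOn_fst (hT : IsPartialTransversal L T) :
    Set.InjOn (fun t : α × β × γ => t.1) T :=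
  fun t ht t' ht' h => by_contra fun hne => (hT.2 t ht t' ht' hne).1 h

lemma injOn_snd_fst (hT : IsPartialTransversal L T) :
    Set.InjOn (fun t : α × β × γ => t.2.1) T :=
  fun t ht t' ht' h => by_contra fun hne => (hT.2 t ht t' ht' hne).2.1 h

lemma card_le_card [Fintype α] (hT : IsPartialTransversal L T) :
    T.card ≤ Fintype.card α :=
  card_le_card_of_injOn _ (fun _ _ => mem_coe.2 (mem_univ _)) hT.injOn_fst

lemma insert [DecidableEq α] [DecidableEq β] [DecidableEq γ] (hT : IsPartialTransversal L T)
    {x : α × β × γ} (hx : x ∈ L) (hr : x.1 ∉ T.image (·.1))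
    (hc : x.2.1 ∉ T.image (·.2.1)) (hs : x.2.2 ∉ T.image (·.2.2)) :
    IsPartialTransversal L (insert x T) := by
  have hfresh : ∀ t ∈ T, x.1 ≠ t.1 ∧ x.2.1 ≠ t.2.1 ∧ x.2.2 ≠ t.2.2 := fun t ht =>
    ⟨fun h => hr (mem_image.2 ⟨t, ht, h.symm⟩), fun h => hc (mem_image.2 ⟨t, ht, h.symm⟩),
      fun h => hs (mem_image.2 ⟨t, ht, h.symm⟩)⟩
  refine ⟨insert_subset hx hT.1, ?_⟩
  simp only [mem_insert]
  rintro t (rfl | ht) t' (rfl | ht') hne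
  · exact absurd rfl hne
  · exact hfresh t' ht'
  · obtain ⟨h₁, h₂, h₃⟩ := hfresh t ht
    exact ⟨h₁.symm, h₂.symm, h₃.symm⟩
  · exact hT.2 t ht t' ht' hne

end IsPartialTransversal

namespace IsMaximalPartialTransversal

variable {α β γ : Type*} [DecidableEq α] [DecidableEq β] [DecidableEq γ]
  {L T : Finset (α × β × γ)}

lemma snd_snd_mem_image (hT : IsMaximalPartialTransversal L T) {x : α × β × γ} (hx : x ∈ L)
    (hr : x.1 ∉ T.image (·.1)) (hc : x.2.1 ∉ T.image (·.2.1)) :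
    x.2.2 ∈ T.image (·.2.2) := by
  by_contra hs
  have hxT : x ∈ T := hT.2 _ (hT.1.insert hx hr hc hs) (subset_insert x T) ▸ mem_insert_self x T
  exact hr (mem_image_of_mem _ hxT)

lemma sub_card_le_card {n : ℕ} {L T : Finset (Fin n × Fin n × Fin n)} (hL : IsLatinSquare L)
    (hT : IsMaximalPartialTransversal L T) : n - T.card ≤ T.card := by
  by_cases hfull : ∀ r, r ∈ T.image (·.1)
  · have : n ≤ T.card := calc
      n = (univ : Finset (Fin n)).card := (card_fin n).symm
      _ ≤ (T.image (·.1)).card := card_le_card fun r _ => hfull r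
      _ ≤ T.card := card_image_le
    omega
  obtain ⟨r, hr⟩ := not_forall.1 hfull
  choose sym hsym using hL.1 r
  set freeCols := (T.image (·.2.1))ᶜ
  have hmaps : Set.MapsTo sym freeCols (T.image (·.2.2)) := fun c hc =>
    hT.snd_snd_mem_image (x := (r, c, sym c)) (hsym c).1 hr (mem_compl.1 hc)
  have hinj : Set.InjOn sym freeCols := fun c _ c' _ h =>
    (hL.2.1 r (sym c)).unique (hsym c).1 (h ▸ (hsym c').1)
  calc n - T.card = freeCols.card := by
        rw [card_compl, card_image_of_injOn hT.1.injOn_snd_fst, Fintype.card_fin]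
    _ ≤ (T.image (·.2.2)).card := card_le_card_of_injOn sym hmaps hinj
    _ ≤ T.card := card_image_le

end IsMaximalPartialTransversal

theorem stmt0 {n : ℕ} (L T : Finset (Fin n × Fin n × Fin n))
    (hL : IsLatinSquare L) (hT : IsMaximalPartialTransversal L T) :
    (n + 1) / 2 ≤ T.card ∧ T.card ≤ n := by
  have hlower := hT.sub_card_le_card hL
  have hupper : T.card ≤ n := by simpa using hT.1.card_le_card
  omega
end

section
/- Let S be a subsquare of the Cayley table of a group G of order n. Then there exists a subgroup H of G and elements x, y ∈ G such that S is the submatrix with rows indexed by the left coset xH and columns indexed by the right coset Hy. In particular, the order of S divides n. -/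
/-!
If `#(R * C) = #R = #C`, then every translate `r • C` with `r ∈ R` already fills `R * C`, so
any two elements of `R` differ by an element of the stabilizer `H` of `C`: `R ⊆ x • H`. On the
other hand `H <• y ⊆ C` for `y ∈ C`. Comparing cardinalities, `#R ≤ |H| ≤ #C = #R`, so both
inclusions are equalities.
-/

open Pointwise MulAction

namespace Finset

variable {G : Type*} [Group G] [DecidableEq G] {s t : Finset G} {a b : G}

theorem smul_finset_eq_mul_of_card_mul_le (ha : a ∈ s) (h : (s * t).card ≤ t.card) :
    a • t = s * t :=
  eq_of_subset_of_card_le (smul_finset_subset_mul ha) (by rwa [card_smul_finset])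

theorem inv_mul_mem_stabilizer_of_card_mul_le (ha : a ∈ s) (hb : b ∈ s)
    (h : (s * t).card ≤ t.card) : a⁻¹ * b ∈ stabilizer G (t : Set G) := by
  rw [stabilizer_coe_finset, mem_stabilizer_iff, mul_smul,
    smul_finset_eq_mul_of_card_mul_le hb h, ← smul_finset_eq_mul_of_card_mul_le ha h,
    inv_smul_smul]

theorem coe_subset_smul_stabilizer_of_card_mul_le (ha : a ∈ s) (h : (s * t).card ≤ t.card) :
    (s : Set G) ⊆ a • (stabilizer G (t : Set G) : Set G) := fun _ hb =>
  (mem_leftCoset_iff a).2 (inv_mul_mem_stabilizer_of_card_mul_le ha hb h)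

end Finset

namespace Subgroup

variable {G : Type*} [Group G]

theorem ncard_smul_coe (x : G) (H : Subgroup G) : (x • (H : Set G)).ncard = Nat.card H := by
  rw [Set.ncard_smul_set]
  rfl

theorem ncard_coe_mul_singleton (H : Subgroup G) (y : G) :
    ((H : Set G) * {y}).ncard = Nat.card H := by
  rw [Set.mul_singleton, Set.ncard_image_of_injective _ (mul_left_injective y)]
  rfl

end Subgroup

theorem stmt5 {G : Type*} [Group G] [Fintype G] [DecidableEq G]
    (R C : Finset G) (hne : R.Nonempty) (hcard : R.card = C.card)
    (hsq : ((R ×ˢ C).image (fun p => p.1 * p.2)).card = R.card) :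
    ∃ (H : Subgroup G) (x y : G),
      (R : Set G) = x • (H : Set G) ∧
      (C : Set G) = (H : Set G) * {y} ∧
      R.card = Nat.card H ∧
      R.card ∣ Fintype.card G := by
  obtain ⟨x, hx⟩ := hne
  obtain ⟨y, hy⟩ : C.Nonempty := Finset.card_pos.1 (hcard ▸ Finset.card_pos.2 ⟨x, hx⟩)
  rw [Finset.image_mul_product] at hsq
  set H := stabilizer G (C : Set G)
  have hRH : (R : Set G) ⊆ x • (H : Set G) :=
    Finset.coe_subset_smul_stabilizer_of_card_mul_le hx (by omega)
  have hHC : (H : Set G) * {y} ⊆ C := by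
    rw [Set.mul_singleton]
    exact op_smul_set_stabilizer_subset (Finset.mem_coe.2 hy)
  have hcardH : R.card = Nat.card H := by
    have hRH_card := Set.ncard_le_ncard hRH
    have hHC_card := Set.ncard_le_ncard hHC
    rw [Set.ncard_coe_finset, H.ncard_smul_coe] at hRH_card
    rw [Set.ncard_coe_finset, H.ncard_coe_mul_singleton] at hHC_card
    omega
  refine ⟨H, x, y, Set.eq_of_subset_of_ncard_le hRH ?_, (Set.eq_of_subset_of_ncard_le hHC ?_).symm,
    hcardH, ?_⟩
  · rw [H.ncard_smul_coe, Set.ncard_coe_finset, hcardH]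
  · rw [H.ncard_coe_mul_singleton, Set.ncard_coe_finset, ← hcard, hcardH]
  · rw [hcardH, ← Nat.card_eq_fintype_card]
    exact H.card_subgroup_dvd_card
end

section
/- Let G be a group with a finite normal subgroup H, and let g ∈ G \ H with g² ∉ H. Let R be the submatrix of the Cayley table of G with rows indexed by H and columns indexed by H ∪ gH, which contains the m = 2|H| symbols H ∪ gH. Then R is not contained in any m × m subsquare of the Cayley table of G. -/
/-!
Put `S = R * C`. Since `1 ∈ R` and `1 ∈ C`, both `R` and `C` lie in `S`, so `H ∪ gH ⊆ C ⊆ S`,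
and comparing sizes gives `S = H ∪ gH`. As `|R| = 2|H|`, some `r ∈ R` lies outside `H`, hence
`r ∈ gH`. But then `r * g ∈ S` lies in `gHg = g²H`, a coset different from `H` and from `gH`.
-/

open Pointwise

namespace Subgroup

variable {G : Type*} [Group G] (H : Subgroup G) {g : G}

lemma ncard_coe : (H : Set G).ncard = Nat.card H := (Nat.card_coe_set_eq _).symm

lemma ncard_union_leftCoset [Finite H] (hg : g ∉ H) :
    ((H : Set G) ∪ g • (H : Set G)).ncard = 2 * Nat.card H := by
  have hdisj : Disjoint (H : Set G) (g • (H : Set G)) := by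
    refine Set.disjoint_left.2 fun x hx hgx => hg ?_
    rw [mem_leftCoset_iff, SetLike.mem_coe] at hgx
    simpa using H.mul_mem hx (H.inv_mem hgx)
  have hfin : (H : Set G).Finite := Set.finite_coe_iff.1 ‹Finite H›
  rw [Set.ncard_union_eq hdisj hfin hfin.smul_set, Set.ncard_smul_set, ncard_coe]
  ring

lemma mul_mul_notMem_union_leftCoset [H.Normal] (hg : g ∉ H) (hg2 : g ^ 2 ∉ H)
    {h : G} (hh : h ∈ H) : g * h * g ∉ (H : Set G) ∪ g • (H : Set G) := by
  rintro (hH | hgH)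
  · refine hg2 ?_
    have hconj : g⁻¹ * h * g ∈ H := Normal.conj_mem' ‹_› h hh g
    have h_sq : g ^ 2 = g * h * g * (g⁻¹ * h * g)⁻¹ := by rw [pow_two]; group
    exact h_sq ▸ H.mul_mem hH (H.inv_mem hconj)
  · rw [mem_leftCoset_iff, SetLike.mem_coe, ← mul_assoc, inv_mul_cancel_left] at hgH
    refine hg ?_
    have h_g : g = h⁻¹ * (h * g) := by group
    exact h_g ▸ H.mul_mem (H.inv_mem hh) hgH

end Subgroup

theorem stmt6 {G : Type*} [Group G] [DecidableEq G] (H : Subgroup G) [H.Normal] [Finite H]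
    (g : G) (hg : g ∉ H) (hg2 : g ^ 2 ∉ H) :
    ¬ ∃ (R C : Finset G),
        (H : Set G) ⊆ (R : Set G) ∧
        ((H : Set G) ∪ g • (H : Set G)) ⊆ (C : Set G) ∧
        R.card = 2 * Nat.card H ∧ C.card = 2 * Nat.card H ∧
        ((R ×ˢ C).image (fun p => p.1 * p.2)).card = 2 * Nat.card H := by
  rintro ⟨R, C, hHR, hUC, hR, -, hRC⟩
  rw [Finset.image_mul_product] at hRC
  have h1R : (1 : G) ∈ R := hHR H.one_mem
  have h1C : (1 : G) ∈ C := hUC (Or.inl H.one_mem)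
  have hU : (H : Set G) ∪ g • (H : Set G) = ↑(R * C) :=
    Set.eq_of_subset_of_ncard_le (hUC.trans (Finset.subset_mul_right C h1R))
      (by rw [Set.ncard_coe_finset, hRC, H.ncard_union_leftCoset hg])
  obtain ⟨r, hr, hrH⟩ : ∃ r ∈ (R : Set G), r ∉ (H : Set G) :=
    Set.exists_mem_notMem_of_ncard_lt_ncard (by
      rw [Set.ncard_coe_finset, hR, H.ncard_coe]
      linarith [Nat.card_pos (α := H)])
  have hrU : r ∈ (H : Set G) ∪ g • (H : Set G) := hU ▸ Finset.subset_mul_left R h1C hr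
  obtain ⟨h, hh, rfl⟩ := hrU.resolve_left hrH
  have hgC : g ∈ C := hUC (Or.inr ⟨1, H.one_mem, mul_one g⟩)
  exact H.mul_mul_notMem_union_leftCoset hg hg2 hh
    (hU ▸ Finset.mul_mem_mul hr hgC)
end

section
/- Let G be a group with a finite normal subgroup H and g ∈ G \ H with g² ∉ H and g³ ∉ H. Let m = 3|H| and let R be the submatrix of the Cayley table of G with rows H ∪ gH and columns H ∪ g⁻¹H. Then R contains exactly m symbols but is not contained in any m × m subsquare of the Cayley table. -/
/-! The rows `H ∪ gH` and the columns `H ∪ g⁻¹H` multiply to the union of the cosets `H`, `gH` and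
`g⁻¹H`, which are distinct since `g, g² ∉ H`. In a subsquare with rows `R ⊇ H ∪ gH` and columns
`C ⊇ H ∪ g⁻¹H`, the row of `1 ∈ R` shows that `C` is the whole symbol set `H ∪ gH ∪ g⁻¹H`; hence
`g ∈ R` and `g ∈ C` produce the symbol `g²`, which lies in none of the three cosets as
`g, g², g³ ∉ H`. -/

open Pointwise

namespace Subgroup

variable {G : Type*} [Group G] (H : Subgroup G)

theorem disjoint_smul_coe_of_inv_mul_notMem {a b : G} (hab : a⁻¹ * b ∉ H) :
    Disjoint (a • (H : Set G)) (b • (H : Set G)) := by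
  rw [Set.disjoint_left]
  rintro _ ⟨x, hx, rfl⟩ ⟨y, hy, hyx⟩
  have : a⁻¹ * b = x * y⁻¹ := by
    simp only [smul_eq_mul] at hyx
    rw [← mul_inv_eq_iff_eq_mul.mpr hyx.symm]
    group
  exact hab (this ▸ H.mul_mem hx (H.inv_mem hy))

theorem smul_coe_mul_smul_coe [hH : H.Normal] (a b : G) :
    a • (H : Set G) * b • (H : Set G) = (a * b) • (H : Set G) := by
  ext z
  constructor
  · rintro ⟨_, ⟨x, hx, rfl⟩, _, ⟨y, hy, rfl⟩, rfl⟩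
    refine ⟨b⁻¹ * x * b⁻¹⁻¹ * y, H.mul_mem (hH.conj_mem x hx b⁻¹) hy, ?_⟩
    simp only [smul_eq_mul]
    group
  · rintro ⟨x, hx, rfl⟩
    exact ⟨a, ⟨1, H.one_mem, mul_one a⟩, b * x, ⟨x, hx, rfl⟩, (mul_assoc a b x).symm⟩

theorem coe_union_smul_mul_coe_union_inv_smul [H.Normal] (g : G) :
    ((H : Set G) ∪ g • (H : Set G)) * ((H : Set G) ∪ g⁻¹ • (H : Set G)) =
      (H : Set G) ∪ g • (H : Set G) ∪ g⁻¹ • (H : Set G) := by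
  have h11 : (H : Set G) * H = H := by simp
  have h1g : (H : Set G) * g⁻¹ • H = g⁻¹ • H := by simpa using smul_coe_mul_smul_coe H 1 g⁻¹
  have hg1 : g • (H : Set G) * H = g • H := by simpa using smul_coe_mul_smul_coe H g 1
  have hgg : g • (H : Set G) * g⁻¹ • H = H := by simpa using smul_coe_mul_smul_coe H g g⁻¹
  rw [Set.union_mul, Set.mul_union, Set.mul_union, h11, h1g, hg1, hgg]
  ext; simp only [Set.mem_union]; tauto

theorem ncard_coe_union_smul_union_inv_smul [Finite H] {g : G} (hg : g ∉ H) (hg2 : g ^ 2 ∉ H) :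
    ((H : Set G) ∪ g • (H : Set G) ∪ g⁻¹ • (H : Set G)).ncard = 3 * Nat.card H := by
  have h1g : Disjoint (H : Set G) (g • (H : Set G)) := by
    simpa using disjoint_smul_coe_of_inv_mul_notMem H (a := 1) (b := g) (by simpa using hg)
  have h1gi : Disjoint (H : Set G) (g⁻¹ • (H : Set G)) := by
    simpa using disjoint_smul_coe_of_inv_mul_notMem H (a := 1) (b := g⁻¹) (by simpa using hg)
  have hggi : Disjoint (g • (H : Set G)) (g⁻¹ • (H : Set G)) :=
    disjoint_smul_coe_of_inv_mul_notMem H (by rwa [← mul_inv_rev, inv_mem_iff, ← pow_two])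
  have hfin : (H : Set G).Finite := Set.toFinite _
  rw [Set.ncard_union_eq (Set.disjoint_union_left.mpr ⟨h1gi, hggi⟩)
      (hfin.union hfin.smul_set) hfin.smul_set,
    Set.ncard_union_eq h1g hfin hfin.smul_set, Set.ncard_smul_set, Set.ncard_smul_set,
    ← Nat.card_coe_set_eq]
  simp only [SetLike.coe_sort_coe]
  ring

theorem sq_notMem_coe_union_smul_union_inv_smul {g : G} (hg : g ∉ H) (hg2 : g ^ 2 ∉ H)
    (hg3 : g ^ 3 ∉ H) : g ^ 2 ∉ (H : Set G) ∪ g • (H : Set G) ∪ g⁻¹ • (H : Set G) := by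
  simp only [Set.mem_union, Set.mem_smul_set_iff_inv_smul_mem, smul_eq_mul, SetLike.mem_coe,
    inv_inv]
  rintro ((h | h) | h)
  · exact hg2 h
  · exact hg (by rwa [pow_two, inv_mul_cancel_left] at h)
  · exact hg3 (by rwa [← pow_succ'] at h)

end Subgroup

theorem mul_mul_subset_mul_of_card_finset_mul_eq {M : Type*} [Monoid M] [DecidableEq M]
    {A B : Set M} {R C : Finset M} (hA : 1 ∈ A) (hAR : A ⊆ R) (hBC : B ⊆ C)
    (hC : C.card = (A * B).ncard) (hRC : (R * C).card = (A * B).ncard) : A * (A * B) ⊆ A * B := by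
  have hAB : A * B ⊆ ↑(R * C) := by
    rw [Finset.coe_mul]
    exact Set.mul_subset_mul hAR hBC
  have hRC_eq : A * B = ↑(R * C) :=
    Set.eq_of_subset_of_ncard_le hAB (by rw [Set.ncard_coe_finset, hRC])
  have hC_eq : (C : Set M) = ↑(R * C) :=
    Set.eq_of_subset_of_ncard_le (Finset.coe_subset.mpr (Finset.subset_mul_right C (hAR hA)))
      (by rw [Set.ncard_coe_finset, Set.ncard_coe_finset, hC, hRC])
  calc A * (A * B) ⊆ R * C := by rw [hRC_eq, ← hC_eq]; exact Set.mul_subset_mul_right hAR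
    _ = A * B := by rw [← Finset.coe_mul, hRC_eq]

theorem stmt7 {G : Type*} [Group G] [DecidableEq G] (H : Subgroup G) [H.Normal] [Finite H]
    (g : G) (hg : g ∉ H) (hg2 : g ^ 2 ∉ H) (hg3 : g ^ 3 ∉ H) :
    Nat.card ((((H : Set G) ∪ g • (H : Set G)) *
        ((H : Set G) ∪ g⁻¹ • (H : Set G))) : Set G) = 3 * Nat.card H ∧
    ¬ ∃ (R C : Finset G),
        ((H : Set G) ∪ g • (H : Set G)) ⊆ (R : Set G) ∧
        ((H : Set G) ∪ g⁻¹ • (H : Set G)) ⊆ (C : Set G) ∧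
        R.card = 3 * Nat.card H ∧ C.card = 3 * Nat.card H ∧
        ((R ×ˢ C).image (fun p => p.1 * p.2)).card = 3 * Nat.card H := by
  have hcard := H.ncard_coe_union_smul_union_inv_smul hg hg2
  rw [← H.coe_union_smul_mul_coe_union_inv_smul g] at hcard
  refine ⟨by rw [Nat.card_coe_set_eq, hcard], ?_⟩
  rintro ⟨R, C, hR, hC, -, hCcard, hRC⟩
  rw [Finset.image_mul_product] at hRC
  have hclosed := mul_mul_subset_mul_of_card_finset_mul_eq (Set.mem_union_left _ H.one_mem) hR hC
    (hCcard.trans hcard.symm) (hRC.trans hcard.symm)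
  have hgA : g ∈ (H : Set G) ∪ g • (H : Set G) := Or.inr ⟨1, H.one_mem, mul_one g⟩
  have hg2AB := hclosed (Set.mul_mem_mul hgA (Set.mul_mem_mul hgA (Or.inl H.one_mem)))
  rw [mul_one, ← pow_two, H.coe_union_smul_mul_coe_union_inv_smul g] at hg2AB
  exact H.sq_notMem_coe_union_smul_union_inv_smul hg hg2 hg3 hg2AB
end

section
/- (Olson) Let X and Y be finite nonempty subsets of a group G with 1 ∈ X, and let Z = XY. Then either XZ = Z, or |Z| ≥ (1/2)|X| + |Y|. -/
/-!
Write `H` for the subgroup generated by `X`. Since `X * H y = H y`, the sets `X (Y ∩ H y)` for the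
right cosets `H y` are disjoint, and each has at least `|Y ∩ H y|` elements. If `X Z ≠ Z`, some
point of `X Z \ Z` lies in a coset `H y₀` that `X (Y ∩ H y₀)` therefore does not fill. It remains
to show that in a group generated by `X ∋ 1`, every nonempty `A` with `X A` not the whole group
has `|X A| ≥ |A| + |X| / 2`.

This is Hamidoune's isoperimetric method. Among the fragments of `X` and of `X⁻¹` (nonempty `A`
with `X A` not everything), take one of least excess `κ = |X A| - |A|` and, among those, of least
size: an atom. Submodularity of `A ↦ |X A|`, together with the duality `A ↦ G \ X A` between
fragments of `X` and of `X⁻¹` when `G` is finite, shows that two atoms which meet are equal. So an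
atom `K` through `1` is invariant under its own right translations, i.e. a finite subgroup, and
`X K ≠ K` because `X` generates. Then `X K` contains two cosets of `K`, so `κ ≥ |K|` and
`|X| ≤ |X K| = |K| + κ ≤ 2 κ`.
-/

open Pointwise

namespace Olson

open Finset

variable {G : Type*} [Group G] [DecidableEq G]

theorem smul_finset_eq_of_mul_eq {X A : Finset G} (h : X * A = A) {x : G} (hx : x ∈ X) :
    x • A = A :=
  eq_of_subset_of_card_le ((smul_finset_subset_mul hx).trans h.le) (card_smul_finset x A).ge

theorem card_mul_union_add_card_mul_inter_le (X A B : Finset G) :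
    (X * (A ∪ B)).card + (X * (A ∩ B)).card ≤ (X * A).card + (X * B).card := by
  rw [mul_union, ← card_union_add_card_inter (X * A)]
  exact Nat.add_le_add_left (card_le_card mul_inter_subset) _

theorem disjoint_inv_mul_sdiff_mul (X A U : Finset G) : Disjoint (X⁻¹ * (U \ (X * A))) A := by
  rw [disjoint_left]
  rintro _ hg ha
  obtain ⟨y, hy, c, hc, rfl⟩ := mem_mul.1 hg
  exact (mem_sdiff.1 hc).2 (mem_mul.2 ⟨y⁻¹, mem_inv'.1 hy, y * c, ha, by group⟩)

theorem two_mul_card_le_card_mul {X A : Finset G} (h1X : 1 ∈ X) (h1A : 1 ∈ A) (hAA : A * A = A)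
    (hXA : X * A ≠ A) : 2 * A.card ≤ (X * A).card := by
  obtain ⟨x, hx, hxA⟩ : ∃ x ∈ X, x ∉ A := by
    by_contra! h
    exact hXA ((mul_subset_mul_right h).trans hAA.le |>.antisymm (subset_mul_right A h1X))
  have hdisj : Disjoint (x • A) A := by
    rw [disjoint_left]
    rintro _ hy hxa
    obtain ⟨a, ha, rfl⟩ := mem_smul_finset.1 hy
    have hxA' : x • A = A :=
      calc x • A = x • a • A := by rw [smul_finset_eq_of_mul_eq hAA ha]
        _ = A := by rw [smul_smul]; exact smul_finset_eq_of_mul_eq hAA hxa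
    exact hxA (by simpa [hxA'] using smul_mem_smul_finset (a := x) h1A)
  calc 2 * A.card = (x • A ∪ A).card := by rw [card_union_of_disjoint hdisj, card_smul_finset]; ring
    _ ≤ (X * A).card :=
      card_le_card (union_subset (smul_finset_subset_mul hx) (subset_mul_right A h1X))

theorem mem_of_mul_eq {X A : Finset G} (hX : Subgroup.closure (X : Set G) = ⊤)
    (h : X * A = A) (hA : A.Nonempty) (g : G) : g ∈ A := by
  obtain ⟨a, ha⟩ := hA
  have hstab : Subgroup.closure (X : Set G) ≤ MulAction.stabilizer G A :=
    (Subgroup.closure_le _).2 fun x hx ↦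
      MulAction.mem_stabilizer_iff.2 (smul_finset_eq_of_mul_eq h hx)
  have : (g * a⁻¹) • A = A := MulAction.mem_stabilizer_iff.1 (hstab (hX ▸ Subgroup.mem_top _))
  have hg := smul_mem_smul_finset (a := g * a⁻¹) ha
  rwa [this, smul_eq_mul, inv_mul_cancel_right] at hg

def IsFragment (X A : Finset G) : Prop :=
  A.Nonempty ∧ ∃ g, g ∉ X * A

theorem IsFragment.mono {X A B : Finset G} (hA : IsFragment X A) (hB : B.Nonempty) (hBA : B ⊆ A) :
    IsFragment X B :=
  ⟨hB, hA.2.imp fun _ hg hgB ↦ hg (mul_subset_mul_left hBA hgB)⟩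

theorem IsFragment.mul_singleton {X A : Finset G} (hA : IsFragment X A) (b : G) :
    IsFragment X (A * {b}) := by
  refine ⟨hA.1.mul (singleton_nonempty b), ?_⟩
  obtain ⟨g, hg⟩ := hA.2
  refine ⟨g * b, fun h ↦ hg ?_⟩
  rw [← mul_assoc, mem_mul] at h
  obtain ⟨c, hc, b', hb', hcb⟩ := h
  rw [mem_singleton.1 hb'] at hcb
  rwa [mul_right_cancel hcb] at hc

theorem IsFragment.mul_ne_self {X A : Finset G} (hX : Subgroup.closure (X : Set G) = ⊤)
    (hA : IsFragment X A) : X * A ≠ A := fun h ↦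
  hA.2.elim fun g hg ↦ hg (h.symm ▸ mem_of_mul_eq hX h hA.1 g)

/-- Minimising over the fragments of `X⁻¹` as well is what makes `two_mul_card_add_le` work:
complements of `X`-neighbourhoods are fragments of `X⁻¹`. -/
structure IsFragmentAtom (X A : Finset G) (κ : ℕ) : Prop where
  isFragment : IsFragment X A
  card_mul : (X * A).card = A.card + κ
  le_card_mul : ∀ S ∈ ({X, X⁻¹} : Set (Finset G)), ∀ C, IsFragment S C → C.card + κ ≤ (S * C).card
  card_le : ∀ S ∈ ({X, X⁻¹} : Set (Finset G)), ∀ C, IsFragment S C →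
    (S * C).card = C.card + κ → A.card ≤ C.card

namespace IsFragmentAtom

variable {X A B : Finset G} {κ : ℕ}

theorem mul_singleton (hA : IsFragmentAtom X A κ) (b : G) : IsFragmentAtom X (A * {b}) κ where
  isFragment := hA.isFragment.mul_singleton b
  card_mul := by rw [← mul_assoc, card_mul_singleton, card_mul_singleton, hA.card_mul]
  le_card_mul := hA.le_card_mul
  card_le S hS C hC hCκ := card_mul_singleton A b ▸ hA.card_le S hS C hC hCκ

theorem card_add_lt_card_mul_of_ssubset (hA : IsFragmentAtom X A κ) (hB : B.Nonempty)
    (hBA : B ⊂ A) : B.card + κ < (X * B).card := by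
  have hBf := hA.isFragment.mono hB hBA.subset
  refine (hA.le_card_mul X (by simp) B hBf).lt_of_ne fun h ↦ ?_
  exact (card_lt_card hBA).not_ge (hA.card_le X (by simp) B hBf h.symm)

theorem two_mul_card_add_le (hA : IsFragmentAtom X A κ) {U : Finset G} (hU : ∀ g, g ∈ U) :
    2 * A.card + κ ≤ U.card := by
  set C := U \ (X * A)
  obtain ⟨g, hg⟩ := hA.isFragment.2
  obtain ⟨a, ha⟩ := hA.isFragment.1
  have hdisj := disjoint_inv_mul_sdiff_mul X A U
  have hC : IsFragment X⁻¹ C :=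
    ⟨⟨g, mem_sdiff.2 ⟨hU g, hg⟩⟩, a, fun h ↦ disjoint_left.1 hdisj h ha⟩
  have hCU : (X⁻¹ * C).card + A.card ≤ U.card := by
    rw [← card_union_of_disjoint hdisj]
    exact card_le_card fun g _ ↦ hU g
  have hCcard : C.card + (X * A).card = U.card := card_sdiff_add_card_eq_card fun g _ ↦ hU g
  rw [hA.card_mul] at hCcard
  have hCκ := hA.le_card_mul X⁻¹ (by simp) C hC
  have := hA.card_le X⁻¹ (by simp) C hC (by omega)
  omega

theorem eq_of_inter_nonempty (hA : IsFragmentAtom X A κ) (hB : IsFragmentAtom X B κ)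
    (hAB : (A ∩ B).Nonempty) : A = B := by
  have hcard : A.card = B.card := (hA.card_le X (by simp) B hB.isFragment hB.card_mul).antisymm
    (hB.card_le X (by simp) A hA.isFragment hA.card_mul)
  refine eq_of_subset_of_card_le (fun a ha ↦ ?_) hcard.ge
  by_contra haB
  have hinter := hA.card_add_lt_card_mul_of_ssubset hAB
    ⟨inter_subset_left, fun h ↦ haB (mem_inter.1 (h ha)).2⟩
  have hsubmod := card_mul_union_add_card_mul_inter_le X A B
  have hunion := card_union_add_card_inter A B
  have hXA := hA.card_mul
  have hXB := hB.card_mul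
  by_cases hU : ∃ g, g ∉ X * (A ∪ B)
  · have := hA.le_card_mul X (by simp) (A ∪ B) ⟨hAB.mono inter_subset_union, hU⟩
    omega
  · have := hA.two_mul_card_add_le (not_exists_not.1 hU)
    omega

theorem mul_self (hA : IsFragmentAtom X A κ) (h1 : 1 ∈ A) : A * A = A := by
  refine (mul_subset_iff.2 fun a ha b hb ↦ ?_).antisymm (subset_mul_left A h1)
  have hb' : b ∈ A * {b} := by simpa using mul_mem_mul h1 (mem_singleton_self b)
  rw [← (hA.mul_singleton b).eq_of_inter_nonempty hA ⟨b, mem_inter.2 ⟨hb', hb⟩⟩]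
  exact mul_mem_mul ha (mem_singleton_self b)

theorem card_le_two_mul (hA : IsFragmentAtom X A κ) (hX : Subgroup.closure (X : Set G) = ⊤)
    (h1 : 1 ∈ X) : X.card ≤ 2 * κ := by
  obtain ⟨g, hg⟩ := hA.isFragment.1
  have hA' := hA.mul_singleton g⁻¹
  have h1A : (1 : G) ∈ A * {g⁻¹} := by simpa using mul_mem_mul hg (mem_singleton_self g⁻¹)
  have := two_mul_card_le_card_mul h1 h1A (hA'.mul_self h1A) (hA'.isFragment.mul_ne_self hX)
  have := card_le_card_mul_right (s := X) hA'.isFragment.1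
  have := hA'.card_mul
  omega

end IsFragmentAtom

theorem pair_inv_eq_of_mem {X S : Finset G} (hS : S ∈ ({X, X⁻¹} : Set (Finset G))) :
    ({S, S⁻¹} : Set (Finset G)) = {X, X⁻¹} := by
  rcases hS with rfl | rfl
  · rfl
  · rw [inv_inv, Set.pair_comm]

theorem exists_isFragmentAtom {X A : Finset G} (h1 : 1 ∈ X) (hA : IsFragment X A) :
    ∃ κ, A.card + κ ≤ (X * A).card ∧
      ∃ S ∈ ({X, X⁻¹} : Set (Finset G)), ∃ B, IsFragmentAtom S B κ := by
  classical
  have hne : ∀ S ∈ ({X, X⁻¹} : Set (Finset G)), S.Nonempty := by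
    rintro S (rfl | rfl)
    exacts [⟨1, h1⟩, Nonempty.inv ⟨1, h1⟩]
  have hκ : ∃ n, ∃ S ∈ ({X, X⁻¹} : Set (Finset G)), ∃ C,
      IsFragment S C ∧ (S * C).card = C.card + n :=
    ⟨_, X, by simp, A, hA, (Nat.add_sub_of_le (card_le_card_mul_left ⟨1, h1⟩)).symm⟩
  have hle : ∀ S ∈ ({X, X⁻¹} : Set (Finset G)), ∀ C, IsFragment S C →
      C.card + Nat.find hκ ≤ (S * C).card := by
    intro S hS C hC
    have hCS := card_le_card_mul_left (t := C) (hne S hS)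
    have := Nat.find_min' hκ ⟨S, hS, C, hC, (Nat.add_sub_of_le hCS).symm⟩
    omega
  obtain ⟨S, hS, C, hC, hCκ⟩ := Nat.find_spec hκ
  have ha : ∃ m, ∃ S ∈ ({X, X⁻¹} : Set (Finset G)), ∃ C,
      IsFragment S C ∧ (S * C).card = C.card + Nat.find hκ ∧ C.card = m :=
    ⟨_, S, hS, C, hC, hCκ, rfl⟩
  obtain ⟨S, hS, B, hB, hBκ, hBcard⟩ := Nat.find_spec ha
  refine ⟨Nat.find hκ, hle X (by simp) A hA, S, hS, B, hB, hBκ, ?_, ?_⟩ <;>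
    rw [pair_inv_eq_of_mem hS]
  · exact hle
  · exact fun T hT C hC hCκ ↦ hBcard ▸ Nat.find_min' ha ⟨T, hT, C, hC, hCκ, rfl⟩

theorem card_add_two_mul_card_le_of_closure_eq_top {X A : Finset G}
    (hX : Subgroup.closure (X : Set G) = ⊤) (h1 : 1 ∈ X) (hA : IsFragment X A) :
    X.card + 2 * A.card ≤ 2 * (X * A).card := by
  obtain ⟨κ, hAκ, S, hS, B, hB⟩ := exists_isFragmentAtom h1 hA
  have : X.card ≤ 2 * κ := by
    rcases hS with rfl | rfl
    · exact hB.card_le_two_mul hX h1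
    · simpa using hB.card_le_two_mul (by rwa [coe_inv, Subgroup.closure_inv]) (by simpa)
  omega

theorem card_add_two_mul_card_le_of_subset_closure {X A : Finset G} (h1 : 1 ∈ X)
    (hA : A.Nonempty) (hAH : (A : Set G) ⊆ Subgroup.closure (X : Set G))
    (hXA : ∃ h ∈ Subgroup.closure (X : Set G), h ∉ X * A) :
    X.card + 2 * A.card ≤ 2 * (X * A).card := by
  classical
  set H := Subgroup.closure (X : Set G)
  have himage : ∀ S : Finset G, (S : Set G) ⊆ H → (S.subtype (· ∈ H)).image H.subtype = S :=
    fun S hS ↦ by simpa [map_eq_image] using subtype_map_of_mem (p := (· ∈ H)) fun x hx ↦ hS hx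
  have hcard : ∀ S : Finset H, (S.image H.subtype).card = S.card :=
    fun S ↦ card_image_of_injective S H.subtype_injective
  set X' := X.subtype (· ∈ H)
  set A' := A.subtype (· ∈ H)
  have hmul : (X' * A').image H.subtype = X * A := by
    rw [image_mul, himage X Subgroup.subset_closure, himage A hAH]
  have hX' : Subgroup.closure (X' : Set H) = ⊤ := by
    convert Subgroup.closure_closure_coe_preimage (k := (X : Set G))
    ext; simp [X']
  have hA' : IsFragment X' A' := by
    obtain ⟨a, ha⟩ := hA
    obtain ⟨h, hH, hh⟩ := hXA
    refine ⟨⟨⟨a, hAH ha⟩, mem_subtype.2 ha⟩, ⟨h, hH⟩, fun hmem ↦ hh ?_⟩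
    rw [← hmul]
    exact mem_image_of_mem _ hmem
  have := card_add_two_mul_card_le_of_closure_eq_top hX' (mem_subtype.2 h1) hA'
  rwa [← hcard X', ← hcard A', ← hcard (X' * A'), hmul, himage X Subgroup.subset_closure,
    himage A hAH] at this

theorem card_mul_eq_card_mul_filter_add (X Y : Finset G) (p : G → Prop) [DecidablePred p]
    (hp : ∀ x ∈ X, ∀ y, p (x * y) ↔ p y) :
    (X * Y).card = (X * Y.filter p).card + (X * Y.filter (¬ p ·)).card := by
  rw [← card_union_of_disjoint, ← mul_union, filter_union_filter_not_eq]
  rw [disjoint_left]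
  rintro _ hg₁ hg₂
  obtain ⟨x₁, hx₁, y₁, hy₁, rfl⟩ := mem_mul.1 hg₁
  obtain ⟨x₂, hx₂, y₂, hy₂, h⟩ := mem_mul.1 hg₂
  exact (mem_filter.1 hy₂).2 ((hp x₂ hx₂ y₂).1 (h ▸ (hp x₁ hx₁ y₁).2 (mem_filter.1 hy₁).2))

theorem card_add_two_mul_card_le_of_mem_coset {X Y : Finset G} (h1 : 1 ∈ X) {y₀ : G}
    (hy₀ : y₀ ∈ Y) (hY : ∀ y ∈ Y, y * y₀⁻¹ ∈ Subgroup.closure (X : Set G)) {h : G}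
    (hh : h ∈ Subgroup.closure (X : Set G)) (hhY : h * y₀ ∉ X * Y) :
    X.card + 2 * Y.card ≤ 2 * (X * Y).card := by
  have := card_add_two_mul_card_le_of_subset_closure (A := Y * {y₀⁻¹}) h1
    ⟨1, mem_mul.2 ⟨y₀, hy₀, y₀⁻¹, mem_singleton_self _, mul_inv_cancel y₀⟩⟩ ?_ ⟨h, hh, ?_⟩
  · rwa [← mul_assoc, card_mul_singleton, card_mul_singleton] at this
  · intro g hg
    obtain ⟨y, hy, _, hy₀', rfl⟩ := mem_mul.1 hg
    rw [mem_singleton.1 hy₀']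
    exact hY y hy
  · rw [← mul_assoc, mul_singleton, mem_smul_finset]
    rintro ⟨z, hz, hzh⟩
    rw [op_smul_eq_mul, mul_inv_eq_iff_eq_mul] at hzh
    exact hhY (hzh ▸ hz)

end Olson

open Olson Finset in
theorem stmt10_general {G : Type*} [Group G] [DecidableEq G]
    (X Y : Finset G) (h1 : (1 : G) ∈ X) :
    X * (X * Y) = X * Y ∨
      (X.card : ℝ) / 2 + (Y.card : ℝ) ≤ ((X * Y).card : ℝ) := by
  classical
  refine or_iff_not_imp_left.2 fun hstab ↦ ?_
  obtain ⟨x, hx, x₀, hx₀, y₀, hy₀, hw⟩ : ∃ x ∈ X, ∃ x₀ ∈ X, ∃ y₀ ∈ Y, x * (x₀ * y₀) ∉ X * Y := by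
    by_contra! h
    refine hstab ((mul_subset_iff.2 fun x hx z hz ↦ ?_).antisymm (subset_mul_right _ h1))
    obtain ⟨x₀, hx₀, y₀, hy₀, rfl⟩ := mem_mul.1 hz
    exact h x hx x₀ hx₀ y₀ hy₀
  set H := Subgroup.closure (X : Set G)
  have hsplit := card_mul_eq_card_mul_filter_add X Y (· * y₀⁻¹ ∈ H) fun x hx y ↦ by
    rw [mul_assoc, Subgroup.mul_mem_cancel_left H (Subgroup.subset_closure hx)]
  have hYcard := card_filter_add_card_filter_not (s := Y) (· * y₀⁻¹ ∈ H)
  have hY₂ := card_le_card (subset_mul_right (Y.filter (¬ · * y₀⁻¹ ∈ H)) h1)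
  have hY₁ := card_add_two_mul_card_le_of_mem_coset (Y := Y.filter (· * y₀⁻¹ ∈ H)) h1
    (mem_filter.2 ⟨hy₀, by simp⟩)
    (fun y hy ↦ (mem_filter.1 hy).2)
    (H.mul_mem (Subgroup.subset_closure hx) (Subgroup.subset_closure hx₀))
    (fun h ↦ hw (mul_assoc x x₀ y₀ ▸ mul_subset_mul_left (filter_subset _ Y) h))
  have : (X.card : ℝ) + 2 * Y.card ≤ 2 * (X * Y).card := by exact_mod_cast (by omega)
  linarith

/-- Olson's theorem. -/
theorem stmt10 {G : Type*} [Group G] [DecidableEq G]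
    (X Y : Finset G) (hX : X.Nonempty) (hY : Y.Nonempty) (h1 : (1 : G) ∈ X) :
    X * (X * Y) = X * Y ∨
      (X.card : ℝ) / 2 + (Y.card : ℝ) ≤ ((X * Y).card : ℝ) :=
  stmt10_general X Y h1
end

section
/- Let G be a group and let X, Y be finite nonempty subsets with |X| = αm, |Y| = βm, where m = |XY|, 1/2 < α ≤ β ≤ 1, and α/2 + β > 1. Then there is a finite subgroup H of G of order m and elements x, y ∈ G with X ⊆ xH, Y ⊆ Hy, and XY = xHy. (One may assume 1 ∈ X after translating; then H = ⟨X⟩ and XY is a right coset of H.) -/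
open Pointwise

set_option maxHeartbeats 1000000 in
theorem stmt11 {G : Type*} [Group G] [DecidableEq G]
    (X Y : Finset G) (hX : X.Nonempty) (hY : Y.Nonempty)
    (α β : ℝ) (hα : 1 / 2 < α) (hαβ : α ≤ β) (hβ : β ≤ 1)
    (hsum : 1 < α / 2 + β)
    (hXc : (X.card : ℝ) = α * ((X * Y).card : ℝ))
    (hYc : (Y.card : ℝ) = β * ((X * Y).card : ℝ)) :
    ∃ (H : Subgroup G) (x y : G),
      Nat.card H = (X * Y).card ∧
      (X : Set G) ⊆ x • (H : Set G) ∧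
      (Y : Set G) ⊆ (H : Set G) * {y} ∧
      ((X * Y : Finset G) : Set G) = x • ((H : Set G) * {y}) := by
  have hmpos : 0 < (X * Y).card := Finset.card_pos.2 (hX.mul hY)
  obtain ⟨a, ha⟩ := hX
  obtain ⟨b, hb⟩ := hY
  set m := (X * Y).card with hmdef
  have hm1 : (1:ℝ) ≤ (m:ℝ) := by exact_mod_cast hmpos
  have h2cX : m < 2 * X.card := by
    have : (m:ℝ) < 2 * (X.card:ℝ) := by rw [hXc]; nlinarith
    exact_mod_cast this
  have h2cY : m < 2 * Y.card := by
    have : (m:ℝ) < 2 * (Y.card:ℝ) := by rw [hYc]; nlinarith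
    exact_mod_cast this
  have h3cY : 2 * m < 3 * Y.card := by
    have : 2 * (m:ℝ) < 3 * (Y.card:ℝ) := by rw [hYc]; nlinarith
    exact_mod_cast this
  set X' : Finset G := a⁻¹ • X with hX'def
  set Y' : Finset G := Y * {b⁻¹} with hY'def
  have hcX' : X'.card = X.card := Finset.card_smul_finset _ _
  have hcY' : Y'.card = Y.card := by
    rw [hY'def, Finset.mul_singleton, Finset.card_smul_finset]
  have hX'1 : (1:G) ∈ X' := by
    have := Finset.smul_mem_smul_finset (a := a⁻¹) ha
    simpa [hX'def] using this
  have hY'1 : (1:G) ∈ Y' := by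
    rw [hY'def]
    have := Finset.mul_mem_mul hb (Finset.mem_singleton_self b⁻¹)
    simpa using this
  set Z : Finset G := X' * Y' with hZdef
  have hZcard : Z.card = m := by
    rw [hZdef, hX'def, hY'def, smul_mul_assoc, Finset.card_smul_finset, ← mul_assoc,
      Finset.mul_singleton, Finset.card_smul_finset]
  set S : Finset G := X'⁻¹ * X' with hSdef
  have hSmem : ∀ x1 ∈ X', ∀ x2 ∈ X', x1⁻¹ * x2 ∈ S :=
    fun x1 h1 x2 h2 => Finset.mul_mem_mul (Finset.inv_mem_inv h1) h2
  have hSchar : ∀ s ∈ S, ∃ x1 ∈ X', ∃ x2 ∈ X', x1⁻¹ * x2 = s := by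
    intro s hs
    rw [hSdef, Finset.mem_mul] at hs
    obtain ⟨u, hu, v, hv, huv⟩ := hs
    rw [Finset.mem_inv] at hu
    obtain ⟨x1, hx1, hx1e⟩ := hu
    exact ⟨x1, hx1, v, hv, by rw [hx1e, huv]⟩
  have hSinv : ∀ s ∈ S, s⁻¹ ∈ S := by
    intro s hs
    obtain ⟨x1, h1, x2, h2, he⟩ := hSchar s hs
    have h : x2⁻¹ * x1 = s⁻¹ := by rw [← he]; group
    exact h ▸ hSmem x2 h2 x1 h1
  have hX'S : X' ⊆ S := by
    intro x hx
    have := hSmem 1 hX'1 x hx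
    simpa using this
  have hsubZ : ∀ x ∈ X', x • Y' ⊆ Z := by
    intro x hx u hu
    rw [Finset.mem_smul_finset] at hu
    obtain ⟨y, hy, rfl⟩ := hu
    exact Finset.mul_mem_mul hx hy
  have hsubZ' : ∀ y ∈ Y', X' * {y} ⊆ Z := by
    intro y hy u hu
    rw [Finset.mem_mul] at hu
    obtain ⟨x, hx, w, hw, rfl⟩ := hu
    rw [Finset.mem_singleton] at hw
    subst hw
    exact Finset.mul_mem_mul hx hy
  have hkeyb : ∀ s ∈ S, 2 * Y.card ≤ (Y' ∩ s • Y').card + m := by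
    intro s hs
    obtain ⟨x1, h1, x2, h2, rfl⟩ := hSchar s hs
    have him : x1 • (Y' ∩ (x1⁻¹ * x2) • Y') = (x1 • Y') ∩ (x2 • Y') := by
      rw [Finset.smul_finset_inter, smul_smul, mul_inv_cancel_left]
    have hcard : (Y' ∩ (x1⁻¹ * x2) • Y').card = ((x1 • Y') ∩ (x2 • Y')).card := by
      rw [← him, Finset.card_smul_finset]
    have hunion : ((x1 • Y') ∪ (x2 • Y')).card ≤ m := by
      rw [← hZcard]
      exact Finset.card_le_card (Finset.union_subset (hsubZ _ h1) (hsubZ _ h2))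
    have hiu := Finset.card_inter_add_card_union (x1 • Y') (x2 • Y')
    have e1 : (x1 • Y').card = Y.card := by rw [Finset.card_smul_finset, hcY']
    have e2 : (x2 • Y').card = Y.card := by rw [Finset.card_smul_finset, hcY']
    omega
  have hYYS : ∀ y1 ∈ Y', ∀ y2 ∈ Y', y1 * y2⁻¹ ∈ S := by
    intro y1 h1 y2 h2
    have hint : ((X' * {y1}) ∩ (X' * {y2})).Nonempty := by
      rw [← Finset.card_pos]
      have hu : ((X' * {y1}) ∪ (X' * {y2})).card ≤ m := by
        rw [← hZcard]
        exact Finset.card_le_card (Finset.union_subset (hsubZ' _ h1) (hsubZ' _ h2))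
      have hiu := Finset.card_inter_add_card_union (X' * {y1}) (X' * {y2})
      have e1 : (X' * {y1}).card = X.card := by
        rw [Finset.mul_singleton, Finset.card_smul_finset, hcX']
      have e2 : (X' * {y2}).card = X.card := by
        rw [Finset.mul_singleton, Finset.card_smul_finset, hcX']
      omega
    obtain ⟨u, hu⟩ := hint
    rw [Finset.mem_inter] at hu
    obtain ⟨hu1, hu2⟩ := hu
    rw [Finset.mem_mul] at hu1 hu2
    obtain ⟨w1, hw1, t1, ht1, he1⟩ := hu1
    obtain ⟨w2, hw2, t2, ht2, he2⟩ := hu2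
    rw [Finset.mem_singleton] at ht1 ht2
    rw [ht1] at he1
    rw [ht2] at he2
    have hw : w1 * y1 = w2 * y2 := he1.trans he2.symm
    have he : y1 * y2⁻¹ = w1⁻¹ * w2 := by
      have := congrArg (fun g => w1⁻¹ * (g * y2⁻¹)) hw
      simpa [mul_assoc] using this
    rw [he]
    exact hSmem w1 hw1 w2 hw2
  have hSmul : ∀ s ∈ S, ∀ t ∈ S, s * t ∈ S := by
    intro s hs t ht
    have hA := hkeyb s⁻¹ (hSinv s hs)
    have hB := hkeyb t ht
    have hAB : ((Y' ∩ s⁻¹ • Y') ∩ (Y' ∩ t • Y')).Nonempty := by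
      rw [← Finset.card_pos]
      have hu : ((Y' ∩ s⁻¹ • Y') ∪ (Y' ∩ t • Y')).card ≤ Y.card := by
        refine le_trans (Finset.card_le_card (Finset.union_subset
          Finset.inter_subset_left Finset.inter_subset_left)) (le_of_eq hcY')
      have hiu := Finset.card_inter_add_card_union (Y' ∩ s⁻¹ • Y') (Y' ∩ t • Y')
      omega
    obtain ⟨y, hy⟩ := hAB
    rw [Finset.mem_inter] at hy
    obtain ⟨hyA, hyB⟩ := hy
    rw [Finset.mem_inter] at hyA hyB
    obtain ⟨hyY, hy1⟩ := hyA
    obtain ⟨-, hy2⟩ := hyB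
    rw [Finset.mem_smul_finset] at hy1 hy2
    obtain ⟨u, hu, hue⟩ := hy1
    obtain ⟨v, hv, hve⟩ := hy2
    have he : s * t = u * v⁻¹ := by
      have h1 : s⁻¹ * u = y := hue
      have h2 : t * v = y := hve
      have h3 : s⁻¹ * u = t * v := by rw [h1, h2]
      have := congrArg (fun g => s * (g * v⁻¹)) h3
      simpa [mul_assoc] using this.symm
    rw [he]
    exact hYYS u hu v hv
  have hsum1 : ∑ s ∈ S, (Y' ∩ s • Y').card ≤ Y.card * Y.card := by
    have h := Finset.card_le_card_of_injOn
      (f := fun p : (_ : G) × G => (p.2, p.1⁻¹ * p.2))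
      (s := S.sigma fun s => Y' ∩ s • Y') (t := Y' ×ˢ Y') ?_ ?_
    · rwa [Finset.card_sigma, Finset.card_product, hcY'] at h
    · intro p hp
      rw [Finset.mem_coe, Finset.mem_sigma] at hp
      obtain ⟨hp1, hp2⟩ := hp
      rw [Finset.mem_inter] at hp2
      obtain ⟨hpY, hps⟩ := hp2
      rw [Finset.mem_smul_finset] at hps
      obtain ⟨u, hu, hue⟩ := hps
      have h2 : p.1⁻¹ * p.2 = u := by rw [← hue]; simp [smul_eq_mul]
      refine Finset.mem_product.2 ⟨hpY, ?_⟩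
      show p.1⁻¹ * p.2 ∈ Y'
      rw [h2]; exact hu
    · intro p hp q hq he
      simp only [Prod.mk.injEq] at he
      obtain ⟨h1, h2⟩ := he
      have hfst : p.1 = q.1 := by
        rw [h1] at h2
        exact inv_injective (mul_right_cancel h2)
      exact Sigma.ext hfst (heq_of_eq h1)
  have hsum2 : S.card * (2 * Y.card) ≤ Y.card * Y.card + S.card * m := by
    have h1 : ∑ _s ∈ S, (2 * Y.card) ≤ ∑ s ∈ S, ((Y' ∩ s • Y').card + m) :=
      Finset.sum_le_sum hkeyb
    rw [Finset.sum_const, Finset.sum_add_distrib, Finset.sum_const, smul_eq_mul,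
      smul_eq_mul] at h1
    omega
  have hScX : S.card < X.card + Y.card := by
    have h1 : (S.card:ℝ) * (2 * (Y.card:ℝ)) ≤ (Y.card:ℝ) * (Y.card:ℝ) + (S.card:ℝ) * (m:ℝ) := by
      exact_mod_cast hsum2
    have hgoal : (S.card:ℝ) < (X.card:ℝ) + (Y.card:ℝ) := by
      rw [hXc, hYc]
      rw [hYc] at h1
      have hm0 : (0:ℝ) < (m:ℝ) := by linarith
      have hkey : β * β < (α + β) * (2 * β - 1) := by
        nlinarith [mul_pos (show (0:ℝ) < α - 2 + 2*β by linarith)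
            (show (0:ℝ) < 2*β - 1 by linarith),
          mul_nonneg (show (0:ℝ) ≤ 3*β - 2 by linarith) (show (0:ℝ) ≤ 1 - β by linarith)]
      nlinarith [mul_pos (show (0:ℝ) < 2*β - 1 by linarith) hm0,
        mul_lt_mul_of_pos_right hkey (mul_pos hm0 hm0), h1,
        mul_nonneg (Nat.cast_nonneg S.card : (0:ℝ) ≤ (S.card:ℝ)) (le_of_lt hm0)]
    exact_mod_cast hgoal
  have hY'S : Y' ⊆ S := by
    intro y hy
    have := hYYS y hy 1 hY'1
    simpa using this
  have hZS : Z ⊆ S := by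
    intro z hz
    rw [hZdef, Finset.mem_mul] at hz
    obtain ⟨x, hx, y, hy, rfl⟩ := hz
    exact hSmul x (hX'S hx) y (hY'S hy)
  have hSZ : S ⊆ Z := by
    intro g hg
    have hT : g • Y'⁻¹ ⊆ S := by
      intro t ht
      rw [Finset.mem_smul_finset] at ht
      obtain ⟨u, hu, rfl⟩ := ht
      rw [Finset.mem_inv] at hu
      obtain ⟨v, hv, rfl⟩ := hu
      exact hSmul g hg v⁻¹ (hSinv v (hY'S hv))
    have hint : (X' ∩ g • Y'⁻¹).Nonempty := by
      rw [← Finset.card_pos]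
      have hcT : (g • Y'⁻¹).card = Y.card := by
        rw [Finset.card_smul_finset, Finset.card_inv, hcY']
      have hu : (X' ∪ g • Y'⁻¹).card ≤ S.card :=
        Finset.card_le_card (Finset.union_subset hX'S hT)
      have hiu := Finset.card_inter_add_card_union X' (g • Y'⁻¹)
      omega
    obtain ⟨x, hx⟩ := hint
    rw [Finset.mem_inter] at hx
    obtain ⟨hx1, hx2⟩ := hx
    rw [Finset.mem_smul_finset] at hx2
    obtain ⟨u, hu, hue⟩ := hx2
    rw [Finset.mem_inv] at hu
    obtain ⟨v, hv, hve⟩ := hu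
    have hge : g = x * v := by
      rw [← hue, ← hve]
      simp [smul_eq_mul, mul_assoc]
    rw [hge]
    exact Finset.mul_mem_mul hx1 hv
  have hSeq : S = Z := Finset.Subset.antisymm hSZ hZS
  have hScard : S.card = m := by rw [hSeq, hZcard]
  have hS1 : (1:G) ∈ S := by
    have := hSmem 1 hX'1 1 hX'1
    simpa using this
  refine ⟨{ carrier := (S : Set G)
            one_mem' := Finset.mem_coe.2 hS1
            mul_mem' := fun hp hq =>
              Finset.mem_coe.2 (hSmul _ (Finset.mem_coe.1 hp) _ (Finset.mem_coe.1 hq))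
            inv_mem' := fun hp => Finset.mem_coe.2 (hSinv _ (Finset.mem_coe.1 hp)) },
        a, b, ?_, ?_, ?_, ?_⟩
  · show Nat.card ((S : Set G) : Type _) = m
    rw [Nat.card_coe_set_eq, Set.ncard_coe_finset, hScard]
  · intro u hu
    have hmem : a⁻¹ * u ∈ S := hX'S (by
      have := Finset.smul_mem_smul_finset (a := a⁻¹) hu
      simpa [hX'def] using this)
    exact ⟨a⁻¹ * u, Finset.mem_coe.2 hmem, by simp [smul_eq_mul]⟩
  · intro v hv
    have hmem : v * b⁻¹ ∈ S := hY'S (by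
      rw [hY'def]; exact Finset.mul_mem_mul hv (Finset.mem_singleton_self b⁻¹))
    exact ⟨v * b⁻¹, Finset.mem_coe.2 hmem, b, rfl, by group⟩
  · ext u
    constructor
    · intro hu
      have hu' : u ∈ X * Y := Finset.mem_coe.1 hu
      rw [Finset.mem_mul] at hu'
      obtain ⟨x, hx, y, hy, rfl⟩ := hu'
      have hxm : a⁻¹ * x ∈ X' := by
        have := Finset.smul_mem_smul_finset (a := a⁻¹) hx
        simpa [hX'def] using this
      have hym : y * b⁻¹ ∈ Y' := by
        rw [hY'def]; exact Finset.mul_mem_mul hy (Finset.mem_singleton_self b⁻¹)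
      have hsm : (a⁻¹ * x) * (y * b⁻¹) ∈ S := hZS (Finset.mul_mem_mul hxm hym)
      refine ⟨(a⁻¹ * x) * (y * b⁻¹) * b, ⟨(a⁻¹ * x) * (y * b⁻¹),
        Finset.mem_coe.2 hsm, b, rfl, rfl⟩, ?_⟩
      show a • ((a⁻¹ * x) * (y * b⁻¹) * b) = x * y
      simp [smul_eq_mul, mul_assoc]
    · intro hu
      obtain ⟨w, hw, hwe⟩ := hu
      obtain ⟨s, hs, t, ht, hte⟩ := hw
      have htb : t = b := ht
      have hsS : s ∈ S := Finset.mem_coe.1 hs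
      have hsZ' : s ∈ Z := hSZ hsS
      rw [hZdef, Finset.mem_mul] at hsZ'
      obtain ⟨x', hx', y', hy', hxy⟩ := hsZ'
      rw [hX'def, Finset.mem_smul_finset] at hx'
      obtain ⟨x, hx, hxe⟩ := hx'
      rw [hY'def, Finset.mem_mul] at hy'
      obtain ⟨y, hy, t2, ht2, hye⟩ := hy'
      rw [Finset.mem_singleton] at ht2
      subst ht2
      refine Finset.mem_coe.2 ?_
      rw [Finset.mem_mul]
      refine ⟨x, hx, y, hy, ?_⟩
      have hue : u = a * (s * b) := by rw [← hwe, ← hte, htb]; rfl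
      rw [hue, ← hxy, ← hxe, ← hye]
      simp [smul_eq_mul, mul_assoc]
end

section
/- Let L be a Latin square of even order n containing a subsquare A of order n/2 which has a near-transversal (a partial transversal of A of length n/2 - 1). Then L contains a maximal partial transversal of length ℓ for every ℓ with n/2 < ℓ ≤ (3/4)n and ℓ ≡ n/2 (mod 2). -/
/-!
Write `m = n/2` and `ℓ = m + 2j`, so `1 ≤ j` and `4j ≤ m`. With `S` the symbol set of `A`, a
counting argument along lines shows that `D = Rᶜ × Cᶜ` also uses only `S`, while `B = R × Cᶜ`
and `C = Rᶜ × C` avoid `S`. Keep `m - j` cells of the near-transversal of `A`; they miss `j`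
rows of `R`, `j` columns of `C` and `j` symbols of `S`. Cover these greedily by `j` cells in
each of `D`, `B`, `C`: as `4j ≤ m`, each new cell can avoid all rows, columns and symbols used
before. The union has at most `m + 2j` cells but meets `m + 2j` rows, columns and symbols, so
it is a partial transversal of length `m + 2j`. It meets every row of `R`, column of `C` and
symbol of `S`, and any other cell of `L` would lie in `D` with a symbol outside `S`; so it is
maximal.
-/

open Finset

section General

variable {τ α β γ δ : Type*}

theorem exists_injOn_image_eq_of_card_le [DecidableEq τ] [DecidableEq α] [DecidableEq β]
    [DecidableEq γ] {L : Finset τ} {p : τ → α} {q : τ → β} {r : τ → γ}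
    (hex : ∀ a c, ∃ t ∈ L, p t = a ∧ r t = c)
    (hinj : ∀ t ∈ L, ∀ t' ∈ L, p t = p t' → q t = q t' → r t = r t')
    {A : Finset γ} {F : Finset β} (Y : Finset α) (hY : #F + 2 * #Y ≤ #A + 1) :
    ∃ P ⊆ L, P.image p = Y ∧ Set.InjOn p P ∧ Set.InjOn q P ∧ Set.InjOn r P ∧
      ∀ t ∈ P, q t ∉ F ∧ r t ∈ A := by
  induction Y using Finset.induction_on with
  | empty => exact ⟨∅, by simp⟩
  | insert a Y ha ih =>
    rw [card_insert_of_notMem ha] at hY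
    obtain ⟨P, hPL, hPY, hp, hq, hr, hPFA⟩ := ih (by omega)
    have hPcard : #P = #Y := by rw [← hPY, card_image_of_injOn hp]
    choose f hfL hfp hfr using hex a
    -- the cells of line `a` with a fresh `r`-value have distinct `q`-values
    have hcand : #(F ∪ P.image q) < #((A \ P.image r).image fun c => q (f c)) := by
      rw [card_image_of_injOn fun c _ c' _ h => (hfr c).symm.trans
        ((hinj _ (hfL c) _ (hfL c') ((hfp c).trans (hfp c').symm) h).trans (hfr c'))]
      have := card_union_le F (P.image q)
      have := le_card_sdiff (P.image r) A
      have := card_image_le (s := P) (f := q)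
      have := card_image_le (s := P) (f := r)
      omega
    obtain ⟨_, hb, hbF⟩ := exists_mem_notMem_of_card_lt_card hcand
    obtain ⟨c, hc, rfl⟩ := mem_image.1 hb
    obtain ⟨hcA, hcP⟩ := mem_sdiff.1 hc
    simp only [mem_union, not_or] at hbF
    have hpf : p (f c) ∉ P.image p := by rw [hPY, hfp]; exact ha
    refine ⟨insert (f c) P, insert_subset (hfL c) hPL, by rw [image_insert, hPY, hfp],
      ?_, ?_, ?_, ?_⟩
    · rw [coe_insert, Set.injOn_insert fun h => hpf (mem_image_of_mem p h)]
      exact ⟨hp, by rwa [← coe_image, mem_coe]⟩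
    · rw [coe_insert, Set.injOn_insert fun h => hpf (mem_image_of_mem p h)]
      exact ⟨hq, by rw [← coe_image, mem_coe]; exact hbF.2⟩
    · rw [coe_insert, Set.injOn_insert fun h => hpf (mem_image_of_mem p h)]
      exact ⟨hr, by rwa [← coe_image, mem_coe, hfr]⟩
    · intro t ht
      rcases mem_insert.1 ht with rfl | ht
      · exact ⟨hbF.1, (hfr c).symm ▸ hcA⟩
      · exact hPFA t ht

theorem mem_of_line_mapsTo {L : Finset τ} {p : τ → α} {q : τ → β} {r : τ → γ} {a : α}
    (hex : ∀ b, ∃ t ∈ L, p t = a ∧ q t = b)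
    (hinj : ∀ t ∈ L, ∀ t' ∈ L, p t = p t' → r t = r t' → q t = q t')
    {Q : Finset β} {S : Finset γ} (hmaps : ∀ t ∈ L, p t = a → q t ∈ Q → r t ∈ S)
    (hcard : #S ≤ #Q) {t : τ} (ht : t ∈ L) (hta : p t = a) (htS : r t ∈ S) : q t ∈ Q := by
  choose f hfL hfp hfq using hex
  have hfinj : ∀ b b', r (f b) = r (f b') → b = b' := fun b b' h =>
    (hfq b).symm.trans ((hinj _ (hfL b) _ (hfL b') ((hfp b).trans (hfp b').symm) h).trans (hfq b'))
  obtain ⟨b, hb, hbt⟩ := surjOn_of_injOn_of_card_le (fun b => r (f b))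
    (fun b hb => hmaps _ (hfL b) (hfp b) ((hfq b).symm ▸ hb))
    (fun b _ b' _ h => hfinj b b' h) hcard htS
  rwa [hinj _ ht _ (hfL b) (hta.trans (hfp b).symm) hbt.symm, hfq]


theorem card_image_add_card_image_le_card_image_sdiff [DecidableEq δ] {f : τ → δ}
    {P P₁ P₂ : Finset τ} {U : Finset δ} (h₁ : P₁ ⊆ P) (h₂ : P₂ ⊆ P) (hU₁ : ∀ t ∈ P₁, f t ∉ U)
    (hU₂ : ∀ t ∈ P₂, f t ∉ U) (h₁₂ : ∀ t ∈ P₂, f t ∉ P₁.image f) :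
    #(P₁.image f) + #(P₂.image f) ≤ #(P.image f \ U) := by
  rw [← card_union_of_disjoint (disjoint_right.2 (by simpa using h₁₂))]
  refine card_le_card fun x hx => ?_
  rcases mem_union.1 hx with hx | hx <;> obtain ⟨t, ht, rfl⟩ := mem_image.1 hx
  · exact mem_sdiff.2 ⟨mem_image_of_mem f (h₁ ht), hU₁ t ht⟩
  · exact mem_sdiff.2 ⟨mem_image_of_mem f (h₂ ht), hU₂ t ht⟩

end General

section PartialTransversal

variable {α β γ : Type*} {L T : Finset (α × β × γ)}

theorem isPartialTransversal_iff_injOn :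
    IsPartialTransversal L T ↔
      T ⊆ L ∧ Set.InjOn (fun t : α × β × γ => t.1) ↑T ∧
        Set.InjOn (fun t : α × β × γ => t.2.1) ↑T ∧
        Set.InjOn (fun t : α × β × γ => t.2.2) ↑T := by
  refine and_congr_right fun _ => ⟨fun h => ⟨?_, ?_, ?_⟩, fun ⟨h₁, h₂, h₃⟩ t ht t' ht' hne =>
    ⟨fun e => hne (h₁ ht ht' e), fun e => hne (h₂ ht ht' e), fun e => hne (h₃ ht ht' e)⟩⟩ <;>
  · intro t ht t' ht' e
    by_contra hne
    have := h t ht t' ht' hne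
    tauto

theorem IsPartialTransversal.subset {T' : Finset (α × β × γ)} (h : IsPartialTransversal L T)
    (hT' : T' ⊆ T) : IsPartialTransversal L T' :=
  ⟨hT'.trans h.1, fun t ht t' ht' => h.2 t (hT' ht) t' (hT' ht')⟩

theorem IsPartialTransversal.card_image_row [DecidableEq α] (h : IsPartialTransversal L T) :
    #(T.image (·.1)) = #T :=
  card_image_of_injOn (isPartialTransversal_iff_injOn.1 h).2.1

theorem IsPartialTransversal.card_image_col [DecidableEq β] (h : IsPartialTransversal L T) :
    #(T.image (·.2.1)) = #T :=
  card_image_of_injOn (isPartialTransversal_iff_injOn.1 h).2.2.1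

theorem IsPartialTransversal.card_image_sym [DecidableEq γ] (h : IsPartialTransversal L T) :
    #(T.image (·.2.2)) = #T :=
  card_image_of_injOn (isPartialTransversal_iff_injOn.1 h).2.2.2

variable [DecidableEq α] [DecidableEq β] [DecidableEq γ]

theorem isPartialTransversal_of_card_le_card_image (hTL : T ⊆ L) (h₁ : #T ≤ #(T.image (·.1)))
    (h₂ : #T ≤ #(T.image (·.2.1))) (h₃ : #T ≤ #(T.image (·.2.2))) :
    IsPartialTransversal L T :=
  isPartialTransversal_iff_injOn.2 ⟨hTL,
    injOn_of_card_image_eq (le_antisymm card_image_le h₁),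
    injOn_of_card_image_eq (le_antisymm card_image_le h₂),
    injOn_of_card_image_eq (le_antisymm card_image_le h₃)⟩

theorem IsPartialTransversal.isMaximal_of_forall (h : IsPartialTransversal L T)
    (hcover : ∀ t ∈ L,
      t.1 ∈ T.image (·.1) ∨ t.2.1 ∈ T.image (·.2.1) ∨ t.2.2 ∈ T.image (·.2.2)) :
    IsMaximalPartialTransversal L T := by
  refine ⟨h, fun T' hT' hTT' => Subset.antisymm (fun t ht => ?_) hTT'⟩
  by_contra htT
  rcases hcover t (hT'.1 ht) with h | h | h <;> obtain ⟨u, hu, hut⟩ := mem_image.1 h <;>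
  · have := hT'.2 t ht u (hTT' hu) fun e => htT (e ▸ hu)
    tauto

def cellsIn (L : Finset (α × β × γ)) (R : Finset α) (C : Finset β) : Finset (α × β × γ) :=
  L.filter fun t => t.1 ∈ R ∧ t.2.1 ∈ C

def symbolsIn (L : Finset (α × β × γ)) (R : Finset α) (C : Finset β) : Finset γ :=
  (cellsIn L R C).image (·.2.2)

theorem sym_mem_symbolsIn {R : Finset α} {C : Finset β} {t : α × β × γ} (ht : t ∈ L)
    (hr : t.1 ∈ R) (hc : t.2.1 ∈ C) : t.2.2 ∈ symbolsIn L R C :=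
  mem_image_of_mem _ (mem_filter.2 ⟨ht, hr, hc⟩)

end PartialTransversal

namespace IsLatinSquare

variable {n : ℕ} {L : Finset (Fin n × Fin n × Fin n)} {t t' : Fin n × Fin n × Fin n}

theorem sym_eq (hL : IsLatinSquare L) (ht : t ∈ L) (ht' : t' ∈ L) (h₁ : t.1 = t'.1)
    (h₂ : t.2.1 = t'.2.1) : t.2.2 = t'.2.2 :=
  (hL.1 t.1 t.2.1).unique ht (by rw [h₁, h₂]; exact ht')

theorem col_eq (hL : IsLatinSquare L) (ht : t ∈ L) (ht' : t' ∈ L) (h₁ : t.1 = t'.1)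
    (h₃ : t.2.2 = t'.2.2) : t.2.1 = t'.2.1 :=
  (hL.2.1 t.1 t.2.2).unique ht (by rw [h₁, h₃]; exact ht')

theorem row_eq (hL : IsLatinSquare L) (ht : t ∈ L) (ht' : t' ∈ L) (h₂ : t.2.1 = t'.2.1)
    (h₃ : t.2.2 = t'.2.2) : t.1 = t'.1 :=
  (hL.2.2 t.2.1 t.2.2).unique ht (by rw [h₂, h₃]; exact ht')

theorem exists_mem_row_col (hL : IsLatinSquare L) (r c : Fin n) :
    ∃ t ∈ L, t.1 = r ∧ t.2.1 = c :=
  let ⟨s, hs, _⟩ := hL.1 r c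
  ⟨(r, c, s), hs, rfl, rfl⟩

theorem exists_mem_row_sym (hL : IsLatinSquare L) (r s : Fin n) :
    ∃ t ∈ L, t.1 = r ∧ t.2.2 = s :=
  let ⟨c, hc, _⟩ := hL.2.1 r s
  ⟨(r, c, s), hc, rfl, rfl⟩

theorem exists_mem_col_sym (hL : IsLatinSquare L) (c s : Fin n) :
    ∃ t ∈ L, t.2.1 = c ∧ t.2.2 = s :=
  let ⟨r, hr, _⟩ := hL.2.2 c s
  ⟨(r, c, s), hr, rfl, rfl⟩

variable {R C : Finset (Fin n)}

theorem row_mem_of_col_mem_of_sym_mem (hL : IsLatinSquare L) (hSR : #(symbolsIn L R C) ≤ #R)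
    (ht : t ∈ L) (hc : t.2.1 ∈ C) (hs : t.2.2 ∈ symbolsIn L R C) : t.1 ∈ R :=
  mem_of_line_mapsTo (p := (·.2.1)) (r := (·.2.2))
    (fun r => (hL.exists_mem_row_col r t.2.1).imp fun _ ⟨hu, h₁, h₂⟩ => ⟨hu, h₂, h₁⟩)
    (fun _ hu _ hu' h₂ h₃ => hL.row_eq hu hu' h₂ h₃)
    (fun _ hu hua hur => sym_mem_symbolsIn hu hur (hua ▸ hc)) hSR ht rfl hs

theorem sym_mem_of_row_notMem_of_col_notMem (hL : IsLatinSquare L)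
    (hSR : #(symbolsIn L R C) ≤ #R) (hSC : n ≤ #(symbolsIn L R C) + #C)
    (ht : t ∈ L) (hr : t.1 ∉ R) (hc : t.2.1 ∉ C) : t.2.2 ∈ symbolsIn L R C := by
  by_contra hs
  refine hc (mem_of_line_mapsTo (p := (·.1)) (r := (·.2.2)) (S := (symbolsIn L R C)ᶜ)
    (hL.exists_mem_row_col t.1) (fun _ hu _ hu' h₁ h₃ => hL.col_eq hu hu' h₁ h₃)
    (fun _ hu hua huc => mem_compl.2 fun hus =>
      hr (hua ▸ hL.row_mem_of_col_mem_of_sym_mem hSR hu huc hus))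
    ?_ ht rfl (mem_compl.2 hs))
  rw [card_compl, Fintype.card_fin]
  omega

theorem exists_partialTransversal_off_rows_cols (hL : IsLatinSquare L)
    (hSR : #(symbolsIn L R C) ≤ #R) {X : Finset (Fin n)} (hX : X ⊆ symbolsIn L R C)
    (hXR : #R + 2 * #X ≤ n + 1) :
    ∃ P, IsPartialTransversal L P ∧ P.image (·.2.2) = X ∧ ∀ t ∈ P, t.1 ∉ R ∧ t.2.1 ∉ C := by
  obtain ⟨P, hPL, hPX, h₃, h₂, h₁, hP⟩ :=
    exists_injOn_image_eq_of_card_le (p := (·.2.2)) (q := (·.2.1)) (r := (·.1)) (A := Rᶜ)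
      (F := ∅) (fun s r => (hL.exists_mem_row_sym r s).imp fun _ ⟨hu, h₁, h₃⟩ => ⟨hu, h₃, h₁⟩)
      (fun _ hu _ hu' h₃ h₂ => hL.row_eq hu hu' h₂ h₃) X
      (by rw [card_empty, card_compl, Fintype.card_fin]; omega)
  refine ⟨P, isPartialTransversal_iff_injOn.2 ⟨hPL, h₁, h₂, h₃⟩, hPX, fun t ht =>
    ⟨mem_compl.1 (hP t ht).2, fun hc => mem_compl.1 (hP t ht).2 ?_⟩⟩
  exact hL.row_mem_of_col_mem_of_sym_mem hSR (hPL ht) hc (hX (hPX ▸ mem_image_of_mem _ ht))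

theorem exists_partialTransversal_off_cols_syms (hL : IsLatinSquare L) {Y F : Finset (Fin n)}
    (hY : Y ⊆ R) (hYF : #F + 2 * #Y + #(symbolsIn L R C) ≤ n + 1) :
    ∃ P, IsPartialTransversal L P ∧ P.image (·.1) = Y ∧
      ∀ t ∈ P, t.2.1 ∉ C ∧ t.2.1 ∉ F ∧ t.2.2 ∉ symbolsIn L R C := by
  obtain ⟨P, hPL, hPY, h₁, h₂, h₃, hP⟩ :=
    exists_injOn_image_eq_of_card_le (p := (·.1)) (q := (·.2.1)) (r := (·.2.2))
      (A := (symbolsIn L R C)ᶜ) (F := F) hL.exists_mem_row_sym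
      (fun _ hu _ hu' => hL.sym_eq hu hu') Y
      (by rw [card_compl, Fintype.card_fin]; omega)
  refine ⟨P, isPartialTransversal_iff_injOn.2 ⟨hPL, h₁, h₂, h₃⟩, hPY, fun t ht =>
    ⟨fun hc => mem_compl.1 (hP t ht).2 ?_, (hP t ht).1, mem_compl.1 (hP t ht).2⟩⟩
  exact sym_mem_symbolsIn (hPL ht) (hY (hPY ▸ mem_image_of_mem _ ht)) hc

theorem exists_partialTransversal_off_rows_syms (hL : IsLatinSquare L) {Z F G : Finset (Fin n)}
    (hZ : Z ⊆ C) (hZFG : #F + #G + 2 * #Z + #(symbolsIn L R C) ≤ n + 1) :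
    ∃ P, IsPartialTransversal L P ∧ P.image (·.2.1) = Z ∧
      ∀ t ∈ P, t.1 ∉ R ∧ t.1 ∉ F ∧ t.2.2 ∉ symbolsIn L R C ∧ t.2.2 ∉ G := by
  obtain ⟨P, hPL, hPZ, h₂, h₁, h₃, hP⟩ :=
    exists_injOn_image_eq_of_card_le (p := (·.2.1)) (q := (·.1)) (r := (·.2.2))
      (A := (symbolsIn L R C)ᶜ \ G) (F := F) hL.exists_mem_col_sym
      (fun _ hu _ hu' h₂ h₁ => hL.sym_eq hu hu' h₁ h₂) Z
      (by
        have := le_card_sdiff G (symbolsIn L R C)ᶜ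
        rw [card_compl, Fintype.card_fin] at this
        omega)
  refine ⟨P, isPartialTransversal_iff_injOn.2 ⟨hPL, h₁, h₂, h₃⟩, hPZ, fun t ht => ?_⟩
  obtain ⟨hF, hSG⟩ := hP t ht
  obtain ⟨hS, hG⟩ := mem_sdiff.1 hSG
  refine ⟨fun hr => mem_compl.1 hS ?_, hF, mem_compl.1 hS, hG⟩
  exact sym_mem_symbolsIn (hPL ht) hr (hZ (hPZ ▸ mem_image_of_mem _ ht))

variable {m j : ℕ}

theorem exists_cells_outside_subsquare (hL : IsLatinSquare L) (hR : #R = m)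
    (hS : #(symbolsIn L R C) = m) (hn : n = 2 * m) {Y Z X : Finset (Fin n)}
    (hY : Y ⊆ R) (hZ : Z ⊆ C) (hX : X ⊆ symbolsIn L R C)
    (hYj : #Y = j) (hZj : #Z = j) (hXj : #X = j) (hj : 4 * j ≤ m) :
    ∃ P ⊆ L, #P ≤ 3 * j ∧
      Y ⊆ P.image (·.1) ∧ Z ⊆ P.image (·.2.1) ∧ X ⊆ P.image (·.2.2) ∧
      2 * j ≤ #(P.image (·.1) \ R) ∧ 2 * j ≤ #(P.image (·.2.1) \ C) ∧
      2 * j ≤ #(P.image (·.2.2) \ symbolsIn L R C) := by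
  obtain ⟨PD, hPD, hPDX, hPDout⟩ :=
    hL.exists_partialTransversal_off_rows_cols (by omega) hX (by omega)
  obtain ⟨PB, hPB, hPBY, hPBout⟩ :=
    hL.exists_partialTransversal_off_cols_syms (C := C) (F := PD.image (·.2.1)) hY
      (by rw [hPD.card_image_col, ← hPD.card_image_sym, hPDX]; omega)
  obtain ⟨PC, hPC, hPCZ, hPCout⟩ :=
    hL.exists_partialTransversal_off_rows_syms (R := R) (F := PD.image (·.1))
      (G := PB.image (·.2.2)) hZ
      (by rw [hPD.card_image_row, ← hPD.card_image_sym, hPDX, hPB.card_image_sym,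
        ← hPB.card_image_row, hPBY]; omega)
  have hPDj : #PD = j := by rw [← hPD.card_image_sym, hPDX, hXj]
  have hPBj : #PB = j := by rw [← hPB.card_image_row, hPBY, hYj]
  have hPCj : #PC = j := by rw [← hPC.card_image_col, hPCZ, hZj]
  refine ⟨PD ∪ PB ∪ PC, union_subset (union_subset hPD.1 hPB.1) hPC.1, ?_,
    hPBY ▸ image_subset_image (subset_union_right.trans subset_union_left),
    hPCZ ▸ image_subset_image subset_union_right,
    hPDX ▸ image_subset_image (subset_union_left.trans subset_union_left), ?_, ?_, ?_⟩
  · have := card_union_le (PD ∪ PB) PC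
    have := card_union_le PD PB
    omega
  · have := card_image_add_card_image_le_card_image_sdiff (P := PD ∪ PB ∪ PC) (f := (·.1))
      (subset_union_left.trans subset_union_left) subset_union_right
      (fun t ht => (hPDout t ht).1) (fun t ht => (hPCout t ht).1) fun t ht => (hPCout t ht).2.1
    rw [hPD.card_image_row, hPC.card_image_row] at this
    omega
  · have := card_image_add_card_image_le_card_image_sdiff (P := PD ∪ PB ∪ PC) (f := (·.2.1))
      (subset_union_left.trans subset_union_left) (subset_union_right.trans subset_union_left)
      (fun t ht => (hPDout t ht).2) (fun t ht => (hPBout t ht).1) fun t ht => (hPBout t ht).2.1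
    rw [hPD.card_image_col, hPB.card_image_col] at this
    omega
  · have := card_image_add_card_image_le_card_image_sdiff (P := PD ∪ PB ∪ PC) (f := (·.2.2))
      (subset_union_right.trans subset_union_left) subset_union_right
      (fun t ht => (hPBout t ht).2.2) (fun t ht => (hPCout t ht).2.2.1)
      fun t ht => (hPCout t ht).2.2.2
    rw [hPB.card_image_sym, hPC.card_image_sym] at this
    omega

theorem exists_isMaximalPartialTransversal_card_eq (hL : IsLatinSquare L) (hR : #R = m)
    (hC : #C = m) (hS : #(symbolsIn L R C) = m) (hn : n = 2 * m)
    {N : Finset (Fin n × Fin n × Fin n)} (hN : IsPartialTransversal (cellsIn L R C) N)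
    (hNj : #N + j = m) (hj : 4 * j ≤ m) :
    ∃ T, IsMaximalPartialTransversal L T ∧ #T = m + 2 * j := by
  have hNR : N.image (·.1) ⊆ R := image_subset_iff.2 fun t ht => (mem_filter.1 (hN.1 ht)).2.1
  have hNC : N.image (·.2.1) ⊆ C := image_subset_iff.2 fun t ht => (mem_filter.1 (hN.1 ht)).2.2
  have hNS : N.image (·.2.2) ⊆ symbolsIn L R C := image_subset_image hN.1
  obtain ⟨P, hPL, hPcard, hPR, hPC, hPS, hrows, hcols, hsyms⟩ :=
    hL.exists_cells_outside_subsquare hR hS hn sdiff_subset sdiff_subset sdiff_subset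
      (by rw [card_sdiff_of_subset hNR, hN.card_image_row]; omega)
      (by rw [card_sdiff_of_subset hNC, hN.card_image_col]; omega)
      (by rw [card_sdiff_of_subset hNS, hN.card_image_sym]; omega) hj
  have hRT : R ⊆ (N ∪ P).image (·.1) := by rw [image_union]; exact sdiff_le_iff.1 hPR
  have hCT : C ⊆ (N ∪ P).image (·.2.1) := by rw [image_union]; exact sdiff_le_iff.1 hPC
  have hST : symbolsIn L R C ⊆ (N ∪ P).image (·.2.2) := by
    rw [image_union]; exact sdiff_le_iff.1 hPS
  have hT₁ := (card_sdiff_add_card (P.image (·.1)) R).trans_le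
    (card_le_card (union_subset (image_subset_image (subset_union_right (s₁ := N))) hRT))
  have hT₂ := (card_sdiff_add_card (P.image (·.2.1)) C).trans_le
    (card_le_card (union_subset (image_subset_image (subset_union_right (s₁ := N))) hCT))
  have hT₃ := (card_sdiff_add_card (P.image (·.2.2)) (symbolsIn L R C)).trans_le
    (card_le_card (union_subset (image_subset_image (subset_union_right (s₁ := N))) hST))
  have hTcard : #(N ∪ P) ≤ m + 2 * j := (card_union_le N P).trans (by omega)
  have hT : IsPartialTransversal L (N ∪ P) :=
    isPartialTransversal_of_card_le_card_image
      (union_subset (hN.1.trans (filter_subset _ _)) hPL) (by omega) (by omega) (by omega)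
  refine ⟨N ∪ P, hT.isMaximal_of_forall fun t ht => ?_,
    le_antisymm hTcard (hT.card_image_row ▸ by omega)⟩
  by_cases hr : t.1 ∈ R
  · exact Or.inl (hRT hr)
  by_cases hc : t.2.1 ∈ C
  · exact Or.inr (Or.inl (hCT hc))
  exact Or.inr (Or.inr (hST
    (hL.sym_mem_of_row_notMem_of_col_notMem (by omega) (by omega) ht hr hc)))

end IsLatinSquare

theorem stmt14 {n : ℕ} (hn : Even n)
    (L : Finset (Fin n × Fin n × Fin n)) (hL : IsLatinSquare L)
    (R C : Finset (Fin n)) (hR : R.card = n / 2) (hC : C.card = n / 2)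
    -- the submatrix on rows `R` and columns `C` uses only `n/2` symbols,
    -- i.e. it is a subsquare `A` of order `n/2`
    (hsub : ((L.filter (fun t => t.1 ∈ R ∧ t.2.1 ∈ C)).image (fun t => t.2.2)).card = n / 2)
    -- `A` has a near-transversal
    (hnear : ∃ T, IsPartialTransversal (L.filter (fun t => t.1 ∈ R ∧ t.2.1 ∈ C)) T ∧
      T.card = n / 2 - 1) :
    ∀ ℓ : ℕ, n / 2 < ℓ → 4 * ℓ ≤ 3 * n → ℓ % 2 = (n / 2) % 2 →
      ∃ T, IsMaximalPartialTransversal L T ∧ T.card = ℓ := by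
  intro ℓ hℓ₁ hℓ₂ hℓ₃
  have hm := (Nat.two_mul_div_two_of_even hn).symm
  obtain ⟨j, rfl, hj₁, hj₄⟩ : ∃ j, ℓ = n / 2 + 2 * j ∧ 1 ≤ j ∧ 4 * j ≤ n / 2 :=
    ⟨(ℓ - n / 2) / 2, by omega, by omega, by omega⟩
  obtain ⟨T, hT, hTcard⟩ := hnear
  obtain ⟨N, hNT, hNcard⟩ := exists_subset_card_eq (s := T) (n := n / 2 - j) (by omega)
  exact hL.exists_isMaximalPartialTransversal_card_eq hR hC hsub hm (hT.subset hNT)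
    (by omega) hj₄
end

section
/- No finite abelian group has a Cayley table that possesses both a transversal and a maximal near-transversal. Consequently, no finite abelian group of order n ≥ 2 has an omniversal Cayley table. -/
/-- The Cayley table of a finite additive abelian group `G`. -/
def cayleyAdd (G : Type*) [AddCommGroup G] [Fintype G] [DecidableEq G] :
    Finset (G × G × G) :=
  Finset.univ.image (fun p : G × G => (p.1, p.2, p.1 + p.2))

lemma mem_cayleyAdd {G : Type*} [AddCommGroup G] [Fintype G] [DecidableEq G]
    (t : G × G × G) : t ∈ cayleyAdd G ↔ t.2.2 = t.1 + t.2.1 := by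
  obtain ⟨a, b, c⟩ := t
  simp only [cayleyAdd, Finset.mem_image, Finset.mem_univ, true_and, Prod.mk.injEq, Prod.exists]
  constructor
  · rintro ⟨x, y, rfl, rfl, rfl⟩; rfl
  · rintro rfl; exact ⟨a, b, rfl, rfl, rfl⟩

lemma aux_full {G : Type*} [AddCommGroup G] [Fintype G] [DecidableEq G]
    (T : Finset (G × G × G)) (f : G × G × G → G) (hf : Set.InjOn f T)
    (hc : T.card = Fintype.card G) : ∑ t ∈ T, f t = ∑ g : G, g := by
  have himg : T.image f = Finset.univ := by
    apply Finset.eq_univ_of_card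
    rw [Finset.card_image_of_injOn hf, hc]
  calc ∑ t ∈ T, f t = ∑ x ∈ T.image f, x :=
      (Finset.sum_image (f := fun x => x) (fun a ha b hb => hf ha hb)).symm
    _ = ∑ g : G, g := by rw [himg]

lemma aux_near {G : Type*} [AddCommGroup G] [Fintype G] [DecidableEq G]
    (T : Finset (G × G × G)) (f : G × G × G → G) (hf : Set.InjOn f T)
    (hc : T.card = Fintype.card G - 1) :
    ∃ a : G, a ∉ T.image f ∧ ∑ t ∈ T, f t = (∑ g : G, g) - a := by
  have hpos : 0 < Fintype.card G := Fintype.card_pos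
  have hcard : (T.image f).card = Fintype.card G - 1 := by
    rw [Finset.card_image_of_injOn hf, hc]
  have hcompl : ((T.image f)ᶜ).card = 1 := by
    rw [Finset.card_compl, hcard]; omega
  obtain ⟨a, ha⟩ := Finset.card_eq_one.mp hcompl
  have hanot : a ∉ T.image f := by
    have : a ∈ (T.image f)ᶜ := ha ▸ Finset.mem_singleton_self a
    simpa using this
  refine ⟨a, hanot, ?_⟩
  have himg : T.image f = Finset.univ.erase a := by
    have h1 : T.image f = ({a} : Finset G)ᶜ := by rw [← ha, compl_compl]
    rw [h1]
    ext x; simp [eq_comm]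
  calc ∑ t ∈ T, f t = ∑ x ∈ T.image f, x :=
      (Finset.sum_image (f := fun x => x) (fun a ha b hb => hf ha hb)).symm
    _ = ∑ x ∈ Finset.univ.erase a, x := by rw [himg]
    _ = (∑ g : G, g) - a := by
        rw [Finset.sum_erase_eq_sub (Finset.mem_univ a)]

lemma injOn_of_pt {G : Type*} [AddCommGroup G] [Fintype G] [DecidableEq G]
    {T : Finset (G × G × G)} (hT : IsPartialTransversal (cayleyAdd G) T)
    (f : G × G × G → G)
    (hsel : ∀ t t' : G × G × G, t.1 ≠ t'.1 ∧ t.2.1 ≠ t'.2.1 ∧ t.2.2 ≠ t'.2.2 → f t ≠ f t') :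
    Set.InjOn f T := by
  intro x hx y hy hxy
  by_contra hne
  exact hsel x y (hT.2 x hx y hy hne) hxy

lemma key {G : Type*} [AddCommGroup G] [Fintype G] [DecidableEq G] :
    ¬ ((∃ T : Finset (G × G × G), IsPartialTransversal (cayleyAdd G) T ∧
          T.card = Fintype.card G) ∧
        (∃ T : Finset (G × G × G), IsMaximalPartialTransversal (cayleyAdd G) T ∧
          T.card = Fintype.card G - 1)) := by
  rintro ⟨⟨Tf, hTf, hTfc⟩, ⟨Tn, ⟨hTn, hmax⟩, hTnc⟩⟩
  -- Step 1: S = 0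
  have hinj1 := injOn_of_pt hTf (fun t => t.1) (fun t t' h => h.1)
  have hinj2 := injOn_of_pt hTf (fun t => t.2.1) (fun t t' h => h.2.1)
  have hinj3 := injOn_of_pt hTf (fun t => t.2.2) (fun t t' h => h.2.2)
  have hs1 : ∑ t ∈ Tf, t.1 = ∑ g : G, g := aux_full Tf (fun t => t.1) hinj1 hTfc
  have hs2 : ∑ t ∈ Tf, t.2.1 = ∑ g : G, g := aux_full Tf (fun t => t.2.1) hinj2 hTfc
  have hs3 : ∑ t ∈ Tf, t.2.2 = ∑ g : G, g := aux_full Tf (fun t => t.2.2) hinj3 hTfc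
  have hsplit : ∑ t ∈ Tf, t.2.2 = (∑ t ∈ Tf, t.1) + ∑ t ∈ Tf, t.2.1 := by
    rw [← Finset.sum_add_distrib]
    apply Finset.sum_congr rfl
    intro t ht
    exact (mem_cayleyAdd t).mp (hTf.1 ht)
  have hS0 : (∑ g : G, g) = 0 := by
    have h := hsplit
    rw [hs1, hs2, hs3] at h
    exact right_eq_add.mp h
  -- Step 2: near transversal sums
  have hn1 := injOn_of_pt hTn (fun t => t.1) (fun t t' h => h.1)
  have hn2 := injOn_of_pt hTn (fun t => t.2.1) (fun t t' h => h.2.1)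
  have hn3 := injOn_of_pt hTn (fun t => t.2.2) (fun t t' h => h.2.2)
  obtain ⟨r0, hr0, hrs'⟩ := aux_near Tn (fun t => t.1) hn1 hTnc
  obtain ⟨c0, hc0, hcs'⟩ := aux_near Tn (fun t => t.2.1) hn2 hTnc
  obtain ⟨v0, hv0, hvs'⟩ := aux_near Tn (fun t => t.2.2) hn3 hTnc
  have hrs : ∑ t ∈ Tn, t.1 = (∑ g : G, g) - r0 := hrs'
  have hcs : ∑ t ∈ Tn, t.2.1 = (∑ g : G, g) - c0 := hcs'
  have hvs : ∑ t ∈ Tn, t.2.2 = (∑ g : G, g) - v0 := hvs'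
  have hsplitn : ∑ t ∈ Tn, t.2.2 = (∑ t ∈ Tn, t.1) + ∑ t ∈ Tn, t.2.1 := by
    rw [← Finset.sum_add_distrib]
    apply Finset.sum_congr rfl
    intro t ht
    exact (mem_cayleyAdd t).mp (hTn.1 ht)
  have hv : v0 = r0 + c0 := by
    have h1 := hsplitn
    rw [hrs, hcs, hvs] at h1
    rw [hS0] at h1
    have h2 : -v0 = -r0 + -c0 := by simpa [sub_eq_add_neg] using h1
    have h3 := neg_inj.mpr h2
    simpa [neg_add, add_comm] using h3
  -- Step 3: extend Tn
  set t0 : G × G × G := (r0, c0, v0) with ht0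
  have ht0L : t0 ∈ cayleyAdd G := (mem_cayleyAdd t0).mpr hv
  have ht0n : t0 ∉ Tn := by
    intro h
    exact hr0 (Finset.mem_image_of_mem (fun t => t.1) h)
  have hpt' : IsPartialTransversal (cayleyAdd G) (insert t0 Tn) := by
    constructor
    · exact Finset.insert_subset ht0L hTn.1
    · intro t ht t' ht' hne
      rcases Finset.mem_insert.mp ht with rfl | ht <;>
        rcases Finset.mem_insert.mp ht' with rfl | ht'
      · exact absurd rfl hne
      · refine ⟨?_, ?_, ?_⟩
        · intro h
          exact hr0 (by rw [show r0 = t'.1 from h]; exact Finset.mem_image_of_mem _ ht')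
        · intro h
          exact hc0 (by rw [show c0 = t'.2.1 from h]; exact Finset.mem_image_of_mem _ ht')
        · intro h
          exact hv0 (by rw [show v0 = t'.2.2 from h]; exact Finset.mem_image_of_mem _ ht')
      · refine ⟨?_, ?_, ?_⟩
        · intro h
          exact hr0 (by rw [← show t.1 = r0 from h]; exact Finset.mem_image_of_mem _ ht)
        · intro h
          exact hc0 (by rw [← show t.2.1 = c0 from h]; exact Finset.mem_image_of_mem _ ht)
        · intro h
          exact hv0 (by rw [← show t.2.2 = v0 from h]; exact Finset.mem_image_of_mem _ ht)
      · exact hTn.2 t ht t' ht' hne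
  have heq := hmax _ hpt' (Finset.subset_insert t0 Tn)
  exact ht0n (heq ▸ Finset.mem_insert_self t0 Tn)

theorem stmt19 {G : Type*} [AddCommGroup G] [Fintype G] [DecidableEq G] :
    (¬ ((∃ T : Finset (G × G × G), IsPartialTransversal (cayleyAdd G) T ∧
          T.card = Fintype.card G) ∧
        (∃ T : Finset (G × G × G), IsMaximalPartialTransversal (cayleyAdd G) T ∧
          T.card = Fintype.card G - 1))) ∧
    (2 ≤ Fintype.card G →
      ¬ ∀ ℓ : ℕ, (Fintype.card G + 1) / 2 ≤ ℓ → ℓ ≤ Fintype.card G →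
        ∃ T : Finset (G × G × G), IsMaximalPartialTransversal (cayleyAdd G) T ∧
          T.card = ℓ) := by
  refine ⟨key, fun h2 hall => ?_⟩
  obtain ⟨Tf, hTf, hTfc⟩ := hall (Fintype.card G) (by omega) le_rfl
  obtain ⟨Tn, hTn, hTnc⟩ := hall (Fintype.card G - 1) (by omega) (by omega)
  exact key ⟨⟨Tf, hTf.1, hTfc⟩, ⟨Tn, hTn, hTnc⟩⟩
end
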